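/- arXiv:0905.0656 — 6 statements merged into one kernel-verified Lean document; each statement's English description precedes it below -/
import Mathlib

section
/- Let G be a countable discrete abelian group (e.g. ℤ^d), H a Hilbert space, 𝒢 = {g_k}_{k∈G} a frame for H with lower frame bound A, and 𝓕 = {f_i}_{i∈I} a family with ‖f_i‖ ≥ u > 0 for all i. Fix p ∈ {1,2}. Suppose (𝓕, a, 𝒢) and (𝓕, b, 𝒢) are both ℓᵖ-localized for maps a, b : I → G. Then a − b is bounded, i.e., sup_{i∈I} ‖a(i) − b(i)‖_∞ < ∞. Conversely, if (𝓕, a, 𝒢) is ℓᵖ-localized and a − b is bounded, then (𝓕, b, 𝒢) is ℓᵖ-localized. -/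
/-!
Since `ℓᵖ ⊆ ℓ²` for `p ≤ 2`, we may choose finite sets `F₁, F₂` outside which the squared
envelopes `r₁², r₂²` of the two localizations have mass `< A u² / 2`. If `a i - b i ∉ F₁ - F₂`,
then for every `k` one of `a i - k ∈ F₁`, `b i - k ∈ F₂` fails, so `∑ₖ |⟨f i, g k⟩|²` is bounded by the two tails, i.e. is `< A u²`,
against the lower frame bound. Hence `a - b` takes values in the finite set `F₁ - F₂`.
Conversely, if `a - b` takes values in a finite box `S`, then `r' k = max_{s ∈ S} r (k + s)` is an
envelope for `b`, with `∑ₖ r' kᵖ ≤ |S| ∑ₖ r kᵖ`.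
-/

open scoped ENNReal NNReal ComplexInnerProductSpace

/-- `(𝓕, a, 𝒢)` is `ℓᵖ`-localized: there is `r ∈ ℓᵖ(G)` with
`|⟨f i, g k'⟩| ≤ r (a i − k')` for all `i, k'`. -/
def IsLpLocalized {E I : Type*} [NormedAddCommGroup E] [InnerProductSpace ℂ E]
    (p : ℕ) {d : ℕ} (f : I → E) (a : I → (Fin d → ℤ)) (g : (Fin d → ℤ) → E) : Prop :=
  ∃ r : (Fin d → ℤ) → ℝ≥0, (∑' k, (r k : ℝ≥0∞) ^ p) < ⊤ ∧
    ∀ i k', ‖(inner ℂ (f i) (g k') : ℂ)‖₊ ≤ r (a i - k')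

open Pointwise

namespace ENNReal

theorem tsum_sq_lt_top_of_tsum_pow_lt_top {κ : Type*} {p : ℕ} (hp : p = 1 ∨ p = 2)
    {r : κ → ℝ≥0∞} (h : ∑' k, r k ^ p < ⊤) : ∑' k, r k ^ 2 < ⊤ := by
  rcases hp with rfl | rfl
  · simp only [pow_one] at h
    calc ∑' k, r k ^ 2 ≤ ∑' k, (∑' m, r m) * r k :=
          ENNReal.tsum_le_tsum fun k => by rw [sq]; gcongr; exact ENNReal.le_tsum k
      _ = (∑' m, r m) * ∑' k, r k := ENNReal.tsum_mul_left
      _ < ⊤ := ENNReal.mul_lt_top h h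
  · exact h

theorem exists_finset_tsum_indicator_compl_lt {κ : Type*} {q : κ → ℝ≥0∞}
    (hq : ∑' k, q k ≠ ⊤) {ε : ℝ≥0∞} (hε : 0 < ε) :
    ∃ F : Finset κ, ∑' k, (↑F : Set κ)ᶜ.indicator q k < ε := by
  obtain ⟨F, hF⟩ :=
    ((ENNReal.tendsto_tsum_compl_atTop_zero hq).eventually (Iio_mem_nhds hε)).exists
  exact ⟨F, by rwa [← tsum_subtype]⟩

end ENNReal

section Shifts

variable {G : Type*} [AddCommGroup G]

theorem tsum_le_tsum_indicator_compl_add {x q₁ q₂ : G → ℝ≥0∞} {F₁ F₂ : Set G} {α β : G}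
    (hαβ : α - β ∉ F₁ - F₂) (h₁ : ∀ k, x k ≤ q₁ (α - k)) (h₂ : ∀ k, x k ≤ q₂ (β - k)) :
    ∑' k, x k ≤ ∑' m, F₁ᶜ.indicator q₁ m + ∑' m, F₂ᶜ.indicator q₂ m := by
  have hpt : ∀ k, x k ≤ F₁ᶜ.indicator q₁ (α - k) + F₂ᶜ.indicator q₂ (β - k) := by
    intro k
    by_cases hk₁ : α - k ∈ F₁
    · have hk₂ : β - k ∉ F₂ := fun hk₂ => hαβ <| by
        simpa using Set.sub_mem_sub hk₁ hk₂
      rw [Set.indicator_of_mem (Set.mem_compl hk₂)]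
      exact (h₂ k).trans le_add_self
    · rw [Set.indicator_of_mem (Set.mem_compl hk₁)]
      exact (h₁ k).trans le_self_add
  calc ∑' k, x k ≤ ∑' k, (F₁ᶜ.indicator q₁ (α - k) + F₂ᶜ.indicator q₂ (β - k)) :=
        ENNReal.tsum_le_tsum hpt
    _ = ∑' m, F₁ᶜ.indicator q₁ m + ∑' m, F₂ᶜ.indicator q₂ m := by
      rw [ENNReal.tsum_add]
      exact congr_arg₂ (· + ·) ((Equiv.subLeft α).tsum_eq _) ((Equiv.subLeft β).tsum_eq _)

theorem exists_finset_forall_sub_mem {I : Type*} {x : I → G → ℝ≥0∞} {q₁ q₂ : G → ℝ≥0∞}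
    {a b : I → G} {c : ℝ≥0∞} (hc : c ≠ 0) (hx : ∀ i, c ≤ ∑' k, x i k)
    (hq₁ : ∑' m, q₁ m ≠ ⊤) (hq₂ : ∑' m, q₂ m ≠ ⊤)
    (h₁ : ∀ i k, x i k ≤ q₁ (a i - k)) (h₂ : ∀ i k, x i k ≤ q₂ (b i - k)) :
    ∃ S : Finset G, ∀ i, a i - b i ∈ S := by
  classical
  have hc₂ : 0 < c / 2 := ENNReal.div_pos hc ENNReal.ofNat_ne_top
  obtain ⟨F₁, hF₁⟩ := ENNReal.exists_finset_tsum_indicator_compl_lt hq₁ hc₂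
  obtain ⟨F₂, hF₂⟩ := ENNReal.exists_finset_tsum_indicator_compl_lt hq₂ hc₂
  refine ⟨F₁ - F₂, fun i => by_contra fun hi => ?_⟩
  rw [← Finset.mem_coe, Finset.coe_sub] at hi
  have := (hx i).trans (tsum_le_tsum_indicator_compl_add hi (h₁ i) (h₂ i))
  exact (this.trans_lt (ENNReal.add_lt_add hF₁ hF₂)).ne (ENNReal.add_halves c).symm

theorem tsum_finset_sup_add_pow_le (r : G → ℝ≥0) (p : ℕ) {S : Finset G} (hS : S.Nonempty) :
    ∑' k, ((S.sup fun s => r (k + s) : ℝ≥0) : ℝ≥0∞) ^ p ≤ S.card * ∑' k, (r k : ℝ≥0∞) ^ p := by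
  have hpt : ∀ k, ((S.sup fun s => r (k + s) : ℝ≥0) : ℝ≥0∞) ^ p ≤
      ∑ s ∈ S, (r (k + s) : ℝ≥0∞) ^ p := by
    intro k
    obtain ⟨s, hs, hsup⟩ := S.exists_mem_eq_sup hS fun s => r (k + s)
    rw [hsup]
    exact Finset.single_le_sum (f := fun s => (r (k + s) : ℝ≥0∞) ^ p) (fun _ _ => zero_le) hs
  calc ∑' k, ((S.sup fun s => r (k + s) : ℝ≥0) : ℝ≥0∞) ^ p
      ≤ ∑' k, ∑ s ∈ S, (r (k + s) : ℝ≥0∞) ^ p := ENNReal.tsum_le_tsum hpt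
    _ = ∑ s ∈ S, ∑' k, (r (k + s) : ℝ≥0∞) ^ p :=
      Summable.tsum_finsetSum fun _ _ => ENNReal.summable
    _ = ∑ s ∈ S, ∑' k, (r k : ℝ≥0∞) ^ p :=
      Finset.sum_congr rfl fun s _ => (Equiv.addRight s).tsum_eq fun k => (r k : ℝ≥0∞) ^ p
    _ = S.card * ∑' k, (r k : ℝ≥0∞) ^ p := by rw [Finset.sum_const, nsmul_eq_mul]

end Shifts

theorem Finset.exists_forall_abs_apply_le {ι : Type*} [Fintype ι] (F : Finset (ι → ℤ)) :
    ∃ N : ℕ, ∀ m ∈ F, ∀ j, |m j| ≤ (N : ℤ) := by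
  refine ⟨F.sup fun m => Finset.univ.sup fun j => (m j).natAbs, fun m hm j => ?_⟩
  rw [Int.abs_eq_natAbs, Int.ofNat_le]
  exact (Finset.le_sup (f := fun j => (m j).natAbs) (Finset.mem_univ j)).trans
    (Finset.le_sup (f := fun m => Finset.univ.sup fun j => (m j).natAbs) hm)

theorem mem_Icc_of_forall_abs_le {ι : Type*} [Fintype ι] [DecidableEq ι] {v : ι → ℤ} {M : ℤ}
    (hv : ∀ j, |v j| ≤ M) : v ∈ Finset.Icc (fun _ => -M) (fun _ => M) :=
  Finset.mem_Icc.2 ⟨fun j => (abs_le.1 (hv j)).1, fun j => (abs_le.1 (hv j)).2⟩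

theorem mul_ofReal_sq_le_tsum_of_le_norm {E G : Type*} [NormedAddCommGroup E]
    [InnerProductSpace ℂ E] {g : G → E} {A : ℝ≥0}
    (hA : ∀ x : E, (A : ℝ≥0∞) * (‖x‖₊ : ℝ≥0∞) ^ 2 ≤ ∑' k, (‖inner ℂ x (g k)‖₊ : ℝ≥0∞) ^ 2)
    {x : E} {u : ℝ} (hu : u ≤ ‖x‖) :
    (A : ℝ≥0∞) * ENNReal.ofReal u ^ 2 ≤ ∑' k, (‖inner ℂ x (g k)‖₊ : ℝ≥0∞) ^ 2 := by
  refine le_trans ?_ (hA x)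
  gcongr
  rwa [ENNReal.ofReal_le_iff_le_toReal ENNReal.coe_ne_top, ENNReal.coe_toReal, coe_nnnorm]

theorem IsLpLocalized.of_forall_sub_mem {E I : Type*} [NormedAddCommGroup E]
    [InnerProductSpace ℂ E] {p d : ℕ} {f : I → E} {g : (Fin d → ℤ) → E} {a b : I → (Fin d → ℤ)}
    (ha : IsLpLocalized p f a g) {S : Finset (Fin d → ℤ)} (hS : S.Nonempty)
    (hab : ∀ i, a i - b i ∈ S) : IsLpLocalized p f b g := by
  obtain ⟨r, hr, hbound⟩ := ha
  refine ⟨fun k => S.sup fun s => r (k + s),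
    (tsum_finset_sup_add_pow_le r p hS).trans_lt (ENNReal.mul_lt_top (by simp) hr),
    fun i k => ?_⟩
  calc ‖inner ℂ (f i) (g k)‖₊ ≤ r (b i - k + (a i - b i)) := by
        rw [sub_add_sub_cancel']; exact hbound i k
    _ ≤ S.sup fun s => r (b i - k + s) := Finset.le_sup (f := fun s => r (b i - k + s)) (hab i)

theorem localized_iff_bounded_difference_general
    {E I : Type*} [NormedAddCommGroup E] [InnerProductSpace ℂ E]
    (p : ℕ) (hp : p = 1 ∨ p = 2) {d : ℕ}
    (f : I → E) (g : (Fin d → ℤ) → E) (a b : I → (Fin d → ℤ))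
    (A B : ℝ≥0) (hA : 0 < A)
    (hFrame : ∀ x : E, (A : ℝ≥0∞) * (‖x‖₊ : ℝ≥0∞) ^ 2 ≤ ∑' k, (‖(inner ℂ x (g k) : ℂ)‖₊ : ℝ≥0∞) ^ 2 ∧
      ∑' k, (‖(inner ℂ x (g k) : ℂ)‖₊ : ℝ≥0∞) ^ 2 ≤ (B : ℝ≥0∞) * (‖x‖₊ : ℝ≥0∞) ^ 2)
    (u : ℝ) (hu : 0 < u) (hf : ∀ i, u ≤ ‖f i‖) :
    (IsLpLocalized p f a g → IsLpLocalized p f b g →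
      ∃ M : ℕ, ∀ i j, |a i j - b i j| ≤ (M : ℤ)) ∧
    (IsLpLocalized p f a g → (∃ M : ℕ, ∀ i j, |a i j - b i j| ≤ (M : ℤ)) →
      IsLpLocalized p f b g) := by
  constructor
  · rintro ⟨r₁, hr₁, h₁⟩ ⟨r₂, hr₂, h₂⟩
    have hc : (A : ℝ≥0∞) * ENNReal.ofReal u ^ 2 ≠ 0 := by simp [hA.ne', hu]
    obtain ⟨S, hS⟩ := exists_finset_forall_sub_mem hc
      (fun i => mul_ofReal_sq_le_tsum_of_le_norm (fun x => (hFrame x).1) (hf i))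
      (ENNReal.tsum_sq_lt_top_of_tsum_pow_lt_top hp hr₁).ne
      (ENNReal.tsum_sq_lt_top_of_tsum_pow_lt_top hp hr₂).ne
      (fun i k => by gcongr; exact h₁ i k) (fun i k => by gcongr; exact h₂ i k)
    obtain ⟨M, hM⟩ := S.exists_forall_abs_apply_le
    exact ⟨M, fun i => hM _ (hS i)⟩
  · rintro ha ⟨M, hM⟩
    exact ha.of_forall_sub_mem ⟨0, mem_Icc_of_forall_abs_le fun _ => by simp⟩
      fun i => mem_Icc_of_forall_abs_le (hM i)

/-- Let `𝒢` be a frame with lower bound `A` and `‖f i‖ ≥ u > 0`.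
If `(𝓕,a,𝒢)` and `(𝓕,b,𝒢)` are both `ℓᵖ`-localized (`p = 1` or `2`), then `a − b` is
bounded; conversely if `(𝓕,a,𝒢)` is `ℓᵖ`-localized and `a − b` is bounded then
`(𝓕,b,𝒢)` is `ℓᵖ`-localized. -/
theorem localized_iff_bounded_difference
    {E I : Type*} [NormedAddCommGroup E] [InnerProductSpace ℂ E]
    (p : ℕ) (hp : p = 1 ∨ p = 2) {d : ℕ}
    (f : I → E) (g : (Fin d → ℤ) → E) (a b : I → (Fin d → ℤ))
    (A B : ℝ≥0) (hA : 0 < A) (hAB : A ≤ B)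
    (hFrame : ∀ x : E, (A : ℝ≥0∞) * (‖x‖₊ : ℝ≥0∞) ^ 2 ≤ ∑' k, (‖(inner ℂ x (g k) : ℂ)‖₊ : ℝ≥0∞) ^ 2 ∧
      ∑' k, (‖(inner ℂ x (g k) : ℂ)‖₊ : ℝ≥0∞) ^ 2 ≤ (B : ℝ≥0∞) * (‖x‖₊ : ℝ≥0∞) ^ 2)
    (u : ℝ) (hu : 0 < u) (hf : ∀ i, u ≤ ‖f i‖) :
    (IsLpLocalized p f a g → IsLpLocalized p f b g →
      ∃ M : ℕ, ∀ i j, |a i j - b i j| ≤ (M : ℤ)) ∧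
    (IsLpLocalized p f a g → (∃ M : ℕ, ∀ i j, |a i j - b i j| ≤ (M : ℤ)) →
      IsLpLocalized p f b g) :=
  localized_iff_bounded_difference_general p hp f g a b A B hA hFrame u hu hf
end

section
/- Let 𝓕 = {f_i}_{i∈I} be a Bessel system in a Hilbert space H with Bessel bound B_𝓕 and ‖f_i‖ ≥ u > 0 for all i, let 𝒢 = {g_k}_{k∈G} be a frame for H with frame bounds A_𝒢, B_𝒢, and let a : I → G be such that (𝓕, a, 𝒢) is ℓ²-localized. Then the upper density D⁺(a;I) is finite; in particular, sup_{k∈G} |a⁻¹(k)| < ∞. -/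
open Filter Set
open scoped ENNReal NNReal

def box (d R : ℕ) (k : Fin d → ℤ) : Set (Fin d → ℤ) :=
  {g | ∀ j, |g j - k j| ≤ (R : ℤ)}

noncomputable def upperDensity {I : Type*} (d : ℕ)
    (a : I → (Fin d → ℤ)) (J : Set I) : ℝ≥0∞ :=
  Filter.limsup (fun R : ℕ =>
    ⨆ k, ((a ⁻¹' box d R k ∩ J).encard : ℝ≥0∞) / ((box d R 0).encard : ℝ≥0∞)) atTop

/-!
Choose `L` so that `r²` carries at most `ε = A𝒢 u² / 2` outside `box d L 0`. By the lower frame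
bound each `f i` has frame-coefficient mass at least `A𝒢 ‖f i‖² ≥ 2ε`, and by localization at
least `ε` of it sits in `box d (R + L) k` whenever `a i ∈ box d R k`. Summing over those `i` and
bounding each column by the Bessel bound, `∑ᵢ |⟨f i, g k'⟩|² ≤ B𝓕 ‖g k'‖² ≤ B𝓕 B𝒢`, gives
`|a⁻¹(box d R k)| ε ≤ |box d (R + L) k| B𝓕 B𝒢 ≤ (2L+1)^d (2R+1)^d B𝓕 B𝒢`.
-/

namespace box

variable {d : ℕ}

theorem mem_iff_dist_le {R : ℕ} {k g : Fin d → ℤ} : g ∈ box d R k ↔ dist g k ≤ R := by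
  rw [dist_pi_le_iff R.cast_nonneg]
  simp only [box, mem_ofPred_eq, Int.dist_eq, ← Int.cast_sub, ← Int.cast_abs]
  exact forall_congr' fun _ => by exact_mod_cast Iff.rfl

theorem eq_Icc (R : ℕ) (k : Fin d → ℤ) :
    box d R k = Icc (k - fun _ => (R : ℤ)) (k + fun _ => (R : ℤ)) := by
  ext g
  simp only [box, mem_ofPred_eq, mem_Icc, Pi.le_def, abs_le, Pi.sub_apply, Pi.add_apply,
    ← forall_and]
  exact forall_congr' fun _ => by omega

theorem encard_eq (R : ℕ) (k : Fin d → ℤ) : (box d R k).encard = ((2 * R + 1) ^ d : ℕ) := by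
  rw [eq_Icc, ← Finset.coe_Icc, encard_coe_eq_coe_finsetCard, Pi.card_Icc]
  simp only [Pi.sub_apply, Pi.add_apply, Int.card_Icc]
  rw [Finset.prod_congr rfl fun j _ => show (k j + R + 1 - (k j - R)).toNat = 2 * R + 1 by omega,
    Finset.prod_const, Finset.card_univ, Fintype.card_fin]

theorem zero_eq_singleton (k : Fin d → ℤ) : box d 0 k = {k} := by
  ext g
  simp [mem_iff_dist_le]

theorem encard_add_le (R L : ℕ) (k : Fin d → ℤ) :
    (box d (R + L) k).encard ≤ (box d L 0).encard * (box d R 0).encard := by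
  simp only [encard_eq, ← Nat.cast_mul, ← Nat.mul_pow, Nat.cast_le]
  exact Nat.pow_le_pow_left (by nlinarith) d

theorem mem_add_of_sub_mem {R L : ℕ} {k x y : Fin d → ℤ} (hx : x ∈ box d R k)
    (hy : x - y ∈ box d L 0) : y ∈ box d (R + L) k := by
  rw [mem_iff_dist_le] at *
  rw [dist_zero_right, ← dist_eq_norm, dist_comm] at hy
  push_cast
  linarith [dist_triangle y x k]

theorem _root_.Set.Finite.exists_subset_box {S : Set (Fin d → ℤ)} (hS : S.Finite) :
    ∃ L, S ⊆ box d L 0 := by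
  obtain ⟨r, hr⟩ := (Metric.isBounded_iff_subset_closedBall 0).1 hS.isBounded
  refine ⟨⌈r⌉₊, hr.trans fun g hg => mem_iff_dist_le.2 ?_⟩
  exact (Metric.mem_closedBall.1 hg).trans (Nat.le_ceil r)

theorem exists_tsum_compl_le {ρ : (Fin d → ℤ) → ℝ≥0∞} (hρ : ∑' m, ρ m ≠ ∞) {ε : ℝ≥0∞}
    (hε : ε ≠ 0) : ∃ L, ∑' m : ↥(box d L 0)ᶜ, ρ m ≤ ε := by
  obtain ⟨S, hS⟩ :=
    ((tendsto_order.1 (ENNReal.tendsto_tsum_compl_atTop_zero hρ)).2 ε hε.bot_lt).exists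
  obtain ⟨L, hL⟩ := S.finite_toSet.exists_subset_box
  exact ⟨L, (ENNReal.tsum_mono_subtype ρ (compl_subset_compl.2 hL)).trans hS.le⟩

theorem tsum_compl_comp_sub_le (ρ : (Fin d → ℤ) → ℝ≥0∞) {R L : ℕ} {k x : Fin d → ℤ}
    (hx : x ∈ box d R k) :
    ∑' y : ↥(box d (R + L) k)ᶜ, ρ (x - y) ≤ ∑' m : ↥(box d L 0)ᶜ, ρ m := by
  have hmaps (y : ↥(box d (R + L) k)ᶜ) : x - (y : Fin d → ℤ) ∈ (box d L 0)ᶜ :=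
    fun h => y.2 (mem_add_of_sub_mem hx h)
  have hinj : Function.Injective
      fun y : ↥(box d (R + L) k)ᶜ => (⟨x - y, hmaps y⟩ : ↥(box d L 0)ᶜ) :=
    fun y z h => Subtype.ext (sub_right_injective (congrArg Subtype.val h))
  exact ENNReal.tsum_comp_le_tsum_of_injective hinj (fun m => ρ m)

end box

section Bessel

variable {E ι : Type*} [NormedAddCommGroup E] [InnerProductSpace ℂ E]

theorem sq_nnnorm_le_of_bessel {g : ι → E} {B : ℝ≥0∞}
    (hB : ∀ x, ∑' k, (‖(inner ℂ x (g k) : ℂ)‖₊ : ℝ≥0∞) ^ 2 ≤ B * (‖x‖₊ : ℝ≥0∞) ^ 2) (k : ι) :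
    (‖g k‖₊ : ℝ≥0∞) ^ 2 ≤ B := by
  have hself : (‖(inner ℂ (g k) (g k) : ℂ)‖₊ : ℝ≥0∞) = (‖g k‖₊ : ℝ≥0∞) ^ 2 := by
    rw [inner_self_eq_norm_sq_to_K (𝕜 := ℂ)]
    norm_cast
    simp [nnnorm_pow]
  rcases eq_or_ne ((‖g k‖₊ : ℝ≥0∞) ^ 2) 0 with h0 | h0
  · simp [h0]
  refine (ENNReal.mul_le_mul_iff_left h0 (by simp [← ENNReal.coe_pow])).1 ?_
  calc (‖g k‖₊ : ℝ≥0∞) ^ 2 * (‖g k‖₊ : ℝ≥0∞) ^ 2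
      = (‖(inner ℂ (g k) (g k) : ℂ)‖₊ : ℝ≥0∞) ^ 2 := by rw [hself]; ring
    _ ≤ ∑' j, (‖(inner ℂ (g k) (g j) : ℂ)‖₊ : ℝ≥0∞) ^ 2 := ENNReal.le_tsum k
    _ ≤ B * (‖g k‖₊ : ℝ≥0∞) ^ 2 := hB (g k)

theorem tsum_sq_nnnorm_inner_le_of_bessel {f : ι → E} {B : ℝ≥0∞}
    (hB : ∀ x, ∑' i, (‖(inner ℂ x (f i) : ℂ)‖₊ : ℝ≥0∞) ^ 2 ≤ B * (‖x‖₊ : ℝ≥0∞) ^ 2) (y : E) :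
    ∑' i, (‖(inner ℂ (f i) y : ℂ)‖₊ : ℝ≥0∞) ^ 2 ≤ B * (‖y‖₊ : ℝ≥0∞) ^ 2 := by
  have hsymm (i : ι) : ‖(inner ℂ (f i) y : ℂ)‖₊ = ‖(inner ℂ y (f i) : ℂ)‖₊ :=
    NNReal.eq (norm_inner_symm _ _)
  simpa only [hsymm] using hB y

end Bessel

section Localized

variable {d : ℕ} {I : Type*}

theorem tsum_le_tsum_box_add_tsum_compl {φ ρ : (Fin d → ℤ) → ℝ≥0∞} {R L : ℕ}
    {k x : Fin d → ℤ} (hφ : ∀ y, φ y ≤ ρ (x - y)) (hx : x ∈ box d R k) :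
    ∑' y, φ y ≤ ∑' y : box d (R + L) k, φ y + ∑' m : ↥(box d L 0)ᶜ, ρ m := by
  rw [← ENNReal.summable.tsum_add_tsum_compl ENNReal.summable]
  gcongr
  exact (ENNReal.tsum_le_tsum fun y : ↥(box d (R + L) k)ᶜ => hφ y).trans
    (box.tsum_compl_comp_sub_le ρ hx)

variable {φ : I → (Fin d → ℤ) → ℝ≥0∞} {a : I → Fin d → ℤ} {ρ : (Fin d → ℤ) → ℝ≥0∞}
  {C ε : ℝ≥0∞} {L : ℕ}

theorem encard_preimage_box_mul_le (hcol : ∀ y, ∑' i, φ i y ≤ C)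
    (hrow : ∀ i, ε + ε ≤ ∑' y, φ i y) (hloc : ∀ i y, φ i y ≤ ρ (a i - y)) (hε : ε ≠ ∞)
    (hL : ∑' m : ↥(box d L 0)ᶜ, ρ m ≤ ε) (R : ℕ) (k : Fin d → ℤ) :
    ((a ⁻¹' box d R k).encard : ℝ≥0∞) * ε ≤ (box d (R + L) k).encard * C := by
  have hmass (i : a ⁻¹' box d R k) : ε ≤ ∑' y : box d (R + L) k, φ i y := by
    refine (ENNReal.add_le_add_iff_right hε).1 ((hrow i).trans ?_)
    exact (tsum_le_tsum_box_add_tsum_compl (hloc i) i.2).trans (by gcongr)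
  calc ((a ⁻¹' box d R k).encard : ℝ≥0∞) * ε = ∑' _ : a ⁻¹' box d R k, ε :=
        (ENNReal.tsum_const ε).symm
    _ ≤ ∑' (i : a ⁻¹' box d R k) (y : box d (R + L) k), φ i y := ENNReal.tsum_le_tsum hmass
    _ = ∑' (y : box d (R + L) k) (i : a ⁻¹' box d R k), φ i y := ENNReal.tsum_comm
    _ ≤ ∑' _ : box d (R + L) k, C := ENNReal.tsum_le_tsum fun y =>
        (ENNReal.tsum_comp_le_tsum_of_injective Subtype.val_injective (φ · y)).trans (hcol y)
    _ = (box d (R + L) k).encard * C := ENNReal.tsum_const C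

theorem encard_preimage_box_le (hcol : ∀ y, ∑' i, φ i y ≤ C)
    (hrow : ∀ i, ε + ε ≤ ∑' y, φ i y) (hloc : ∀ i y, φ i y ≤ ρ (a i - y)) (hε₀ : ε ≠ 0)
    (hε : ε ≠ ∞) (hL : ∑' m : ↥(box d L 0)ᶜ, ρ m ≤ ε) (R : ℕ) (k : Fin d → ℤ) :
    ((a ⁻¹' box d R k).encard : ℝ≥0∞) ≤ (box d L 0).encard * C / ε * (box d R 0).encard := by
  rw [← ENNReal.mul_div_right_comm, ENNReal.le_div_iff_mul_le (.inl hε₀) (.inl hε)]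
  calc ((a ⁻¹' box d R k).encard : ℝ≥0∞) * ε ≤ (box d (R + L) k).encard * C :=
        encard_preimage_box_mul_le hcol hrow hloc hε hL R k
    _ ≤ (box d L 0).encard * (box d R 0).encard * C := by
        gcongr
        exact_mod_cast box.encard_add_le R L k
    _ = (box d L 0).encard * C * (box d R 0).encard := by ring

theorem upperDensity_univ_le (hC : ∀ R k,
    ((a ⁻¹' box d R k).encard : ℝ≥0∞) ≤ C * (box d R 0).encard) : upperDensity d a univ ≤ C :=
  limsup_le_of_le (by isBoundedDefault) <| .of_forall fun R =>
    iSup_le fun k => ENNReal.div_le_of_le_mul (by simpa only [inter_univ] using hC R k)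

end Localized

theorem exists_nat_forall_encard_le {α ι : Type*} {s : ι → Set α} {C : ℝ≥0∞} (hC : C ≠ ∞)
    (h : ∀ k, ((s k).encard : ℝ≥0∞) ≤ C) : ∃ K : ℕ, ∀ k, (s k).encard ≤ K := by
  obtain ⟨K, hK⟩ := ENNReal.exists_nat_gt hC
  exact ⟨K, fun k => ENat.toENNReal_le.1 (by simpa using (h k).trans hK.le)⟩

theorem upperDensity_lt_top_of_l2_localized_general
    {E I : Type*} [NormedAddCommGroup E] [InnerProductSpace ℂ E] {d : ℕ}
    (f : I → E) (g : (Fin d → ℤ) → E)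
    (BF : ℝ≥0) (hBessel : ∀ x : E, ∑' i, (‖(inner ℂ x (f i) : ℂ)‖₊ : ℝ≥0∞) ^ 2
        ≤ (BF : ℝ≥0∞) * (‖x‖₊ : ℝ≥0∞) ^ 2)
    (u : ℝ) (hu : 0 < u) (hf : ∀ i, u ≤ ‖f i‖)
    (AG BG : ℝ≥0) (hAG : 0 < AG)
    (hFrame : ∀ x : E,
      (AG : ℝ≥0∞) * (‖x‖₊ : ℝ≥0∞) ^ 2 ≤ ∑' k, (‖(inner ℂ x (g k) : ℂ)‖₊ : ℝ≥0∞) ^ 2 ∧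
      ∑' k, (‖(inner ℂ x (g k) : ℂ)‖₊ : ℝ≥0∞) ^ 2 ≤ (BG : ℝ≥0∞) * (‖x‖₊ : ℝ≥0∞) ^ 2)
    (a : I → (Fin d → ℤ))
    (r : (Fin d → ℤ) → ℝ≥0) (hr : (∑' k, (r k : ℝ≥0∞) ^ 2) < ⊤)
    (hloc : ∀ i k', ‖(inner ℂ (f i) (g k') : ℂ)‖₊ ≤ r (a i - k')) :
    upperDensity d a Set.univ < ⊤ ∧
    ∃ K : ℕ, ∀ k, (a ⁻¹' {k}).encard ≤ K := by
  set ε : ℝ≥0∞ := AG * ENNReal.ofReal u ^ 2 / 2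
  have hε₀ : ε ≠ 0 := by simp [ε, hAG.ne', hu]
  have hε : ε ≠ ∞ := by finiteness
  have hrow (i : I) : ε + ε ≤ ∑' k, (‖(inner ℂ (f i) (g k) : ℂ)‖₊ : ℝ≥0∞) ^ 2 := by
    rw [ENNReal.add_halves]
    refine le_trans ?_ (hFrame (f i)).1
    gcongr
    rw [← enorm_eq_nnnorm, ← ofReal_norm]
    exact ENNReal.ofReal_le_ofReal (hf i)
  have hcol (k : Fin d → ℤ) : ∑' i, (‖(inner ℂ (f i) (g k) : ℂ)‖₊ : ℝ≥0∞) ^ 2 ≤ BF * BG :=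
    (tsum_sq_nnnorm_inner_le_of_bessel hBessel (g k)).trans
      (by gcongr; exact sq_nnnorm_le_of_bessel (fun x => (hFrame x).2) k)
  obtain ⟨L, hL⟩ := box.exists_tsum_compl_le hr.ne hε₀
  have hbound := encard_preimage_box_le (ρ := fun m => (r m : ℝ≥0∞) ^ 2) hcol hrow
    (fun i k => by gcongr; exact hloc i k) hε₀ hε hL
  have hC : ((box d L 0).encard : ℝ≥0∞) * (BF * BG) / ε ≠ ∞ :=
    ENNReal.div_ne_top (by simp [box.encard_eq, ENNReal.mul_eq_top]) hε₀
  refine ⟨(upperDensity_univ_le hbound).trans_lt hC.lt_top, exists_nat_forall_encard_le hC ?_⟩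
  simpa [box.zero_eq_singleton] using hbound 0

/-- If `𝓕` is Bessel with bound `B𝓕` and `‖f i‖ ≥ u > 0`, `𝒢` is a frame
with bounds `A𝒢 ≤ B𝒢`, and `(𝓕, a, 𝒢)` is `ℓ²`-localized, then `D⁺(a; I) < ∞`; in
particular the fibers of `a` are uniformly finite. -/
theorem upperDensity_lt_top_of_l2_localized
    {E I : Type*} [NormedAddCommGroup E] [InnerProductSpace ℂ E] {d : ℕ}
    (f : I → E) (g : (Fin d → ℤ) → E)
    (BF : ℝ≥0) (hBessel : ∀ x : E, ∑' i, (‖(inner ℂ x (f i) : ℂ)‖₊ : ℝ≥0∞) ^ 2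
        ≤ (BF : ℝ≥0∞) * (‖x‖₊ : ℝ≥0∞) ^ 2)
    (u : ℝ) (hu : 0 < u) (hf : ∀ i, u ≤ ‖f i‖)
    (AG BG : ℝ≥0) (hAG : 0 < AG) (hAB : AG ≤ BG)
    (hFrame : ∀ x : E,
      (AG : ℝ≥0∞) * (‖x‖₊ : ℝ≥0∞) ^ 2 ≤ ∑' k, (‖(inner ℂ x (g k) : ℂ)‖₊ : ℝ≥0∞) ^ 2 ∧
      ∑' k, (‖(inner ℂ x (g k) : ℂ)‖₊ : ℝ≥0∞) ^ 2 ≤ (BG : ℝ≥0∞) * (‖x‖₊ : ℝ≥0∞) ^ 2)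
    (a : I → (Fin d → ℤ))
    (r : (Fin d → ℤ) → ℝ≥0) (hr : (∑' k, (r k : ℝ≥0∞) ^ 2) < ⊤)
    (hloc : ∀ i k', ‖(inner ℂ (f i) (g k') : ℂ)‖₊ ≤ r (a i - k')) :
    upperDensity d a Set.univ < ⊤ ∧
    ∃ K : ℕ, ∀ k, (a ⁻¹' {k}).encard ≤ K :=
  upperDensity_lt_top_of_l2_localized_general f g BF hBessel u hu hf AG BG hAG hFrame a r hr hloc
end

section
/- Let (𝓕 = {f_i}_{i∈I}, a, 𝒢 = {g_k}_{k∈G}) be ℓ¹-localized with D⁺(a;I) < ∞. For R > 0 define the matrix M^R : ℓ²(G) → ℓ²(I) by (M^R)_{i,k} = ⟨f_i, g_k⟩ if ‖a(i) − k‖_∞ > R, and (M^R)_{i,k} = 0 otherwise. Then the operator norm ‖M^R‖ → 0 as R → ∞. -/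
open Filter Set
open scoped ENNReal NNReal

/-! Every entry of `M^R` is dominated by the kernel `ρ_R(a i - k)`, where `ρ_R` is `r` cut down
to the complement of the box of radius `R`. Its row sums equal the tail `ε_R = ∑_{‖m‖∞ > R} r m`,
and since the fibres of `a` have at most `K` points its column sums are at most `K ε_R`. Schur's
test gives `‖M^R‖ ≤ √K ε_R`, and `ε_R → 0` as the tail of a convergent series. -/

theorem ENNReal.sq_sum_mul_le_sum_mul_sum_mul_sq {ι : Type*} (s : Finset ι) (w f : ι → ℝ≥0∞) :
    (∑ i ∈ s, w i * f i) ^ 2 ≤ (∑ i ∈ s, w i) * ∑ i ∈ s, w i * f i ^ 2 := by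
  have h : ∑ i ∈ s, w i * f i
      ≤ (∑ i ∈ s, w i) ^ (1 / 2 : ℝ) * (∑ i ∈ s, w i * f i ^ 2) ^ (1 / 2 : ℝ) := by
    convert ENNReal.inner_le_weight_mul_Lp_of_nonneg s one_le_two w f using 3 <;> norm_num
  have hsq : ∀ x : ℝ≥0∞, (x ^ (1 / 2 : ℝ)) ^ 2 = x := fun x => by
    rw [← ENNReal.rpow_natCast, ← ENNReal.rpow_mul]; norm_num
  calc (∑ i ∈ s, w i * f i) ^ 2
      ≤ ((∑ i ∈ s, w i) ^ (1 / 2 : ℝ) * (∑ i ∈ s, w i * f i ^ 2) ^ (1 / 2 : ℝ)) ^ 2 := by gcongr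
    _ = _ := by rw [mul_pow, hsq, hsq]

theorem ENNReal.sq_tsum_mul_le_tsum_mul_tsum_mul_sq {ι : Type*} (w f : ι → ℝ≥0∞) :
    (∑' i, w i * f i) ^ 2 ≤ (∑' i, w i) * ∑' i, w i * f i ^ 2 := by
  rw [ENNReal.tsum_eq_iSup_sum, ENNReal.iSup_pow]
  refine iSup_le fun s => (ENNReal.sq_sum_mul_le_sum_mul_sum_mul_sq s w f).trans ?_
  gcongr <;> exact ENNReal.sum_le_tsum s

theorem ENNReal.tsum_sq_tsum_mul_le_of_schur {ι κ : Type*} (w : ι → κ → ℝ≥0∞) (f : κ → ℝ≥0∞)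
    {α β : ℝ≥0∞} (hrow : ∀ i, ∑' k, w i k ≤ α) (hcol : ∀ k, ∑' i, w i k ≤ β) :
    ∑' i, (∑' k, w i k * f k) ^ 2 ≤ α * β * ∑' k, f k ^ 2 :=
  calc ∑' i, (∑' k, w i k * f k) ^ 2
      ≤ ∑' i, α * ∑' k, w i k * f k ^ 2 := by
        gcongr with i
        exact (ENNReal.sq_tsum_mul_le_tsum_mul_tsum_mul_sq _ _).trans (by gcongr; exact hrow i)
    _ = α * ∑' k, (∑' i, w i k) * f k ^ 2 := by
        rw [ENNReal.tsum_mul_left, ENNReal.tsum_comm]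
        simp_rw [ENNReal.tsum_mul_right]
    _ ≤ α * ∑' k, β * f k ^ 2 := by gcongr with k; exact hcol k
    _ = α * β * ∑' k, f k ^ 2 := by rw [ENNReal.tsum_mul_left, mul_assoc]

theorem lp.enorm_sq_eq_tsum {α : Type*} {E : α → Type*} [∀ i, NormedAddCommGroup (E i)]
    (f : lp E 2) : ‖f‖ₑ ^ 2 = ∑' i, ‖f i‖ₑ ^ 2 := by
  have h : HasSum (fun i => ‖f i‖ ^ 2) (‖f‖ ^ 2) := by
    simpa using lp.hasSum_norm (p := 2) (by norm_num) f
  simp_rw [← ofReal_norm, ← ENNReal.ofReal_pow (norm_nonneg _), ← h.tsum_eq]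
  exact ENNReal.ofReal_tsum_of_nonneg (fun _ => by positivity) h.summable

theorem lp.opNorm_le_of_schur {𝕜 ι κ E F : Type*} [NontriviallyNormedField 𝕜]
    [NormedAddCommGroup E] [NormedSpace 𝕜 E] [NormedAddCommGroup F] [NormedSpace 𝕜 F]
    (T : lp (fun _ : κ => E) 2 →L[𝕜] lp (fun _ : ι => F) 2) (w : ι → κ → ℝ≥0∞) {α β : ℝ≥0}
    (hrow : ∀ i, ∑' k, w i k ≤ α) (hcol : ∀ k, ∑' i, w i k ≤ β)
    (hT : ∀ x i, ‖T x i‖ₑ ≤ ∑' k, w i k * ‖x k‖ₑ) :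
    ‖T‖ ≤ NNReal.sqrt (α * β) := by
  refine T.opNorm_le_bound (by positivity) fun x => ?_
  have hsq : ‖T x‖ₑ ^ 2 ≤ (NNReal.sqrt (α * β) * ‖x‖ₑ) ^ 2 :=
    calc ‖T x‖ₑ ^ 2 = ∑' i, ‖T x i‖ₑ ^ 2 := lp.enorm_sq_eq_tsum _
      _ ≤ ∑' i, (∑' k, w i k * ‖x k‖ₑ) ^ 2 := by gcongr with i; exact hT x i
      _ ≤ α * β * ∑' k, ‖x k‖ₑ ^ 2 := ENNReal.tsum_sq_tsum_mul_le_of_schur w _ hrow hcol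
      _ = (NNReal.sqrt (α * β) * ‖x‖ₑ) ^ 2 := by
        rw [← lp.enorm_sq_eq_tsum, mul_pow, ← ENNReal.coe_pow, NNReal.sq_sqrt, ENNReal.coe_mul]
  have := (ENNReal.pow_le_pow_left_iff two_ne_zero).mp hsq
  rw [← ofReal_norm, ← ofReal_norm, ← ENNReal.ofReal_coe_nnreal,
    ← ENNReal.ofReal_mul (by positivity)] at this
  exact (ENNReal.ofReal_le_ofReal_iff (by positivity)).mp this

theorem ENNReal.tsum_comp_le_mul_tsum_of_encard_fiber_le {ι G : Type*} (a : ι → G) {K : ℕ}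
    (hK : ∀ k, (a ⁻¹' {k}).encard ≤ K) (F : G → ℝ≥0∞) :
    ∑' i, F (a i) ≤ K * ∑' k, F k :=
  calc ∑' i, F (a i) = ∑' k, ∑' i : a ⁻¹' {k}, F (a i) := (ENNReal.tsum_fiberwise _ a).symm
    _ = ∑' k, (a ⁻¹' {k}).encard * F k := by
        congr! 2 with k
        rw [← ENNReal.tsum_set_const]
        exact tsum_congr fun i => by rw [i.2]
    _ ≤ ∑' k, K * F k := by gcongr with k; exact_mod_cast hK k
    _ = K * ∑' k, F k := ENNReal.tsum_mul_left

theorem lp.opNorm_le_sqrt_mul_of_localized {𝕜 ι G E F : Type*} [NontriviallyNormedField 𝕜]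
    [AddCommGroup G] [NormedAddCommGroup E] [NormedSpace 𝕜 E] [NormedAddCommGroup F]
    [NormedSpace 𝕜 F] (T : lp (fun _ : G => E) 2 →L[𝕜] lp (fun _ : ι => F) 2) (a : ι → G)
    {K : ℕ} (hK : ∀ k, (a ⁻¹' {k}).encard ≤ K) (ρ : G → ℝ≥0∞) {ε : ℝ≥0} (hρ : ∑' m, ρ m ≤ ε)
    (hT : ∀ x i, ‖T x i‖ₑ ≤ ∑' k, ρ (a i - k) * ‖x k‖ₑ) :
    ‖T‖ ≤ NNReal.sqrt K * ε := by
  have hrow (i : ι) : ∑' k, ρ (a i - k) ≤ ε := ((Equiv.subLeft (a i)).tsum_eq ρ).trans_le hρ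
  have hcol (k : G) : ∑' i, ρ (a i - k) ≤ (K * ε : ℝ≥0) := by
    rw [ENNReal.coe_mul, ENNReal.coe_natCast]
    calc ∑' i, ρ (a i - k) ≤ K * ∑' m, ρ (m - k) :=
          ENNReal.tsum_comp_le_mul_tsum_of_encard_fiber_le a hK fun m => ρ (m - k)
      _ ≤ K * ε := by gcongr; exact ((Equiv.subRight k).tsum_eq ρ).trans_le hρ
  calc ‖T‖ ≤ NNReal.sqrt (ε * (K * ε)) := lp.opNorm_le_of_schur T _ hrow hcol hT
    _ = NNReal.sqrt K * ε := by
      rw [mul_left_comm, NNReal.sqrt_mul, NNReal.sqrt_mul_self]; push_cast; rfl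

theorem notMem_box_zero_iff {d R : ℕ} {m : Fin d → ℤ} :
    m ∉ box d R 0 ↔ ∃ j, (R : ℤ) < |m j| := by
  simp [box]

theorem tendsto_tsum_indicator_box_compl_zero {d : ℕ} {f : (Fin d → ℤ) → ℝ≥0∞}
    (hf : ∑' m, f m ≠ ∞) :
    Tendsto (fun R : ℕ => ∑' m, (box d R 0)ᶜ.indicator f m) atTop (nhds 0) := by
  set S : ℕ → Finset (Fin d → ℤ) := fun R => Fintype.piFinset fun _ => Finset.Icc (-(R : ℤ)) R
  have hS : ∀ R, (S R : Set (Fin d → ℤ)) = box d R 0 := fun R => by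
    ext m
    simp only [S, box, Finset.mem_coe, Fintype.mem_piFinset, Finset.mem_Icc, Set.mem_ofPred_eq,
      Pi.zero_apply, sub_zero, abs_le]
  have hS_mono : Monotone S := fun R R' h =>
    Fintype.piFinset_subset _ _ fun _ => Finset.Icc_subset_Icc (by omega) (by omega)
  have hS_top : Tendsto S atTop atTop := by
    refine tendsto_atTop_finset_of_monotone hS_mono fun m => ⟨∑ j, (m j).natAbs, ?_⟩
    rw [← Finset.mem_coe, hS]
    intro j
    have := Finset.single_le_sum (fun j _ => (m j).natAbs.zero_le) (Finset.mem_univ j)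
    simp only [Pi.zero_apply, sub_zero, Int.abs_eq_natAbs]
    exact_mod_cast this
  refine ((ENNReal.tendsto_tsum_compl_atTop_zero hf).comp hS_top).congr fun R => ?_
  simp only [Function.comp_apply, ← hS, ← tsum_subtype]
  rfl

theorem tail_matrix_norm_tendsto_zero_general
    {E I : Type*} [NormedAddCommGroup E] [InnerProductSpace ℂ E] {d : ℕ}
    (f : I → E) (g : (Fin d → ℤ) → E) (a : I → (Fin d → ℤ))
    (r : (Fin d → ℤ) → ℝ≥0) (hr : (∑' k, (r k : ℝ≥0∞)) < ⊤)
    (hloc : ∀ i k', ‖(inner ℂ (f i) (g k') : ℂ)‖₊ ≤ r (a i - k'))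
    (hK : ∃ K : ℕ, ∀ k, (a ⁻¹' {k}).encard ≤ K)
    (M : ℕ → (lp (fun _ : Fin d → ℤ => ℂ) 2 →L[ℂ] lp (fun _ : I => ℂ) 2))
    (hM : ∀ (R : ℕ) (x : lp (fun _ : Fin d → ℤ => ℂ) 2) (i : I),
      (M R x : ∀ _ : I, ℂ) i =
        ∑' k : Fin d → ℤ,
          (if ∃ j, (R : ℤ) < |a i j - k j| then (inner ℂ (f i) (g k) : ℂ) else 0) * x k) :
    Filter.Tendsto (fun R : ℕ => ‖M R‖) Filter.atTop (nhds 0) := by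
  obtain ⟨K, hK⟩ := hK
  set ρ : ℕ → (Fin d → ℤ) → ℝ≥0∞ := fun R => (box d R 0)ᶜ.indicator fun m => r m
  set ε : ℕ → ℝ≥0∞ := fun R => ∑' m, ρ R m
  have hε_ne_top (R : ℕ) : ε R ≠ ∞ :=
    ne_top_of_le_ne_top hr.ne (ENNReal.tsum_le_tsum (Set.indicator_le_self _ _))
  have hentry (R : ℕ) (x) (i : I) : ‖M R x i‖ₑ ≤ ∑' k, ρ R (a i - k) * ‖x k‖ₑ := by
    rw [hM]
    refine enorm_tsum_le_tsum_enorm.trans (ENNReal.tsum_le_tsum fun k => ?_)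
    rw [enorm_mul]
    gcongr
    split_ifs with h
    · have hk : a i - k ∈ (box d R 0)ᶜ := notMem_box_zero_iff.mpr h
      exact (ENNReal.coe_le_coe.mpr (hloc i k)).trans_eq
        (Set.indicator_of_mem hk fun m => (r m : ℝ≥0∞)).symm
    · simp
  have hbound (R : ℕ) : ‖M R‖ ≤ NNReal.sqrt K * (ε R).toNNReal :=
    lp.opNorm_le_sqrt_mul_of_localized (M R) a hK (ρ R)
      (ENNReal.coe_toNNReal (hε_ne_top R)).ge (hentry R)
  have hε : Tendsto (fun R => (ε R).toNNReal) atTop (nhds 0) :=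
    ENNReal.toNNReal_zero ▸ (ENNReal.tendsto_toNNReal ENNReal.zero_ne_top).comp
      (tendsto_tsum_indicator_box_compl_zero (ne_top_of_lt hr))
  refine squeeze_zero (fun R => norm_nonneg _) hbound ?_
  simpa using NNReal.tendsto_coe.mpr (hε.const_mul (NNReal.sqrt K))

/-- If `(𝓕, a, 𝒢)` is `ℓ¹`-localized and `D⁺(a;I) < ∞`, then the norms of
the tail matrices `M^R` (with entries `⟨f_i, g_k⟩` for `‖a(i) − k‖_∞ > R` and `0`
otherwise), viewed as operators `ℓ²(G) → ℓ²(I)`, tend to `0` as `R → ∞`. -/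
theorem tail_matrix_norm_tendsto_zero
    {E I : Type*} [NormedAddCommGroup E] [InnerProductSpace ℂ E] {d : ℕ}
    (f : I → E) (g : (Fin d → ℤ) → E) (a : I → (Fin d → ℤ))
    (r : (Fin d → ℤ) → ℝ≥0) (hr : (∑' k, (r k : ℝ≥0∞)) < ⊤)
    (hloc : ∀ i k', ‖(inner ℂ (f i) (g k') : ℂ)‖₊ ≤ r (a i - k'))
    (hdens : upperDensity d a Set.univ < ⊤)
    (hK : ∃ K : ℕ, ∀ k, (a ⁻¹' {k}).encard ≤ K)
    (M : ℕ → (lp (fun _ : Fin d → ℤ => ℂ) 2 →L[ℂ] lp (fun _ : I => ℂ) 2))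
    (hM : ∀ (R : ℕ) (x : lp (fun _ : Fin d → ℤ => ℂ) 2) (i : I),
      (M R x : ∀ _ : I, ℂ) i =
        ∑' k : Fin d → ℤ,
          (if ∃ j, (R : ℤ) < |a i j - k j| then (inner ℂ (f i) (g k) : ℂ) else 0) * x k) :
    Filter.Tendsto (fun R : ℕ => ‖M R‖) Filter.atTop (nhds 0) :=
  tail_matrix_norm_tendsto_zero_general f g a r hr hloc hK M hM
end

section
/- (Density rescaling by coarsening of the group) Let H be a finite abelian group of order N, G = ℤ^d × H, and U : ℤ^d → G the bijection (k₁,…,k_d) ↦ (k₁,…,k_{d−1}, ⌊k_d/N⌋, u(k_d mod N)) for a bijection u : {0,…,N−1} → H. For a : I → G set b = U⁻¹ ∘ a : I → ℤ^d. Then for every J ⊆ I, D⁻(b;J) = D⁻(a;J) and D⁺(b;J) = D⁺(a;J). -/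
open Filter Set
open scoped ENNReal

/-- ℓ∞-box in `ℤ^{d+1}`, modeled as `(Fin d → ℤ) × ℤ` with a distinguished last
coordinate. -/
def srcBox (d R : ℕ) (c : (Fin d → ℤ) × ℤ) : Set ((Fin d → ℤ) × ℤ) :=
  {x | (∀ j, |x.1 j - c.1 j| ≤ (R : ℤ)) ∧ |x.2 - c.2| ≤ (R : ℤ)}

/-- Box in `G = ℤ^{d+1} × H` (`H` the finite part, eventually entirely contained). -/
def grpBox (d R : ℕ) {H : Type*} (c : ((Fin d → ℤ) × ℤ) × H) :
    Set (((Fin d → ℤ) × ℤ) × H) :=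
  {x | (∀ j, |x.1.1 j - c.1.1 j| ≤ (R : ℤ)) ∧ |x.1.2 - c.1.2| ≤ (R : ℤ)}

noncomputable def srcLowerDensity {I : Type*} (d : ℕ)
    (b : I → (Fin d → ℤ) × ℤ) (J : Set I) : ℝ≥0∞ :=
  Filter.liminf (fun R : ℕ =>
    ⨅ c, ((b ⁻¹' srcBox d R c ∩ J).encard : ℝ≥0∞) / ((srcBox d R 0).encard : ℝ≥0∞)) atTop

noncomputable def srcUpperDensity {I : Type*} (d : ℕ)
    (b : I → (Fin d → ℤ) × ℤ) (J : Set I) : ℝ≥0∞ :=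
  Filter.limsup (fun R : ℕ =>
    ⨆ c, ((b ⁻¹' srcBox d R c ∩ J).encard : ℝ≥0∞) / ((srcBox d R 0).encard : ℝ≥0∞)) atTop

noncomputable def grpLowerDensity {I : Type*} (d : ℕ) {H : Type*} [Zero H]
    (a : I → ((Fin d → ℤ) × ℤ) × H) (J : Set I) : ℝ≥0∞ :=
  Filter.liminf (fun R : ℕ =>
    ⨅ c, ((a ⁻¹' grpBox d R c ∩ J).encard : ℝ≥0∞) / ((grpBox d R (0 : ((Fin d → ℤ) × ℤ) × H)).encard : ℝ≥0∞)) atTop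

noncomputable def grpUpperDensity {I : Type*} (d : ℕ) {H : Type*} [Zero H]
    (a : I → ((Fin d → ℤ) × ℤ) × H) (J : Set I) : ℝ≥0∞ :=
  Filter.limsup (fun R : ℕ =>
    ⨆ c, ((a ⁻¹' grpBox d R c ∩ J).encard : ℝ≥0∞) / ((grpBox d R (0 : ((Fin d → ℤ) × ℤ) × H)).encard : ℝ≥0∞)) atTop

/-!
Pull the counting back to the measure `μ S = #{i ∈ J | b i ∈ S}` on `ℤ^d × ℤ`. The `U`-preimage of
a box of radius `R` in `G` is a box of side `2R + 1` in the first `d` coordinates and `N (2R + 1)`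
in the last one, starting at a multiple of `N` (a *coarse cube*), so both sides are lower/upper
limits of normalised extremal `μ`-masses, of cubes and of coarse cubes respectively. A coarse cube
is a stack of `N` cubes, which compares the two at every scale. Conversely, a cube of large side `S`
contains, and is contained in, a grid of coarse cubes of a fixed side `s` whose total volume is
`S ^ (d + 1) (1 + o(1))`; letting `S → ∞` and then taking the extremum over `s` closes the gap.
-/

open MeasureTheory Topology

lemma Filter.liminf_eq_liminf_of_le_of_le_liminf {α β : Type*} [CompleteLattice α] {l : Filter β}
    [l.NeBot] {f g : β → α} (hfg : ∀ b, f b ≤ g b) (hg : ∀ b, g b ≤ liminf f l) :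
    liminf f l = liminf g l :=
  le_antisymm (liminf_le_liminf (.of_forall hfg))
    ((liminf_le_liminf (.of_forall hg)).trans (liminf_const _).le)

lemma Filter.limsup_eq_limsup_of_le_of_limsup_le {α β : Type*} [CompleteLattice α] {l : Filter β}
    [l.NeBot] {f g : β → α} (hgf : ∀ b, g b ≤ f b) (hg : ∀ b, limsup f l ≤ g b) :
    limsup f l = limsup g l :=
  le_antisymm ((limsup_const _).ge.trans (limsup_le_limsup (.of_forall hg)))
    (limsup_le_limsup (.of_forall hgf))

namespace ENNReal

lemma tendsto_natCast_div_of_le_add {α : Type*} {l : Filter α} {x S : α → ℕ} (C : ℕ)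
    (hS : Tendsto S l atTop) (hx : ∀ᶠ a in l, x a ≤ S a + C ∧ S a ≤ x a + C) :
    Tendsto (fun a => (x a : ℝ≥0∞) / S a) l (𝓝 1) := by
  have hC : Tendsto (fun a => (C : ℝ≥0∞) / S a) l (𝓝 0) := by
    simpa [div_eq_mul_inv] using
      ENNReal.Tendsto.const_mul (a := (C : ℝ≥0∞)) (ENNReal.tendsto_inv_nat_nhds_zero.comp hS)
        (.inr (natCast_ne_top C))
  have hlow : Tendsto (fun a => 1 - (C : ℝ≥0∞) / S a) l (𝓝 1) := by
    simpa using ENNReal.Tendsto.sub tendsto_const_nhds hC (.inl one_ne_top)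
  have hup : Tendsto (fun a => 1 + (C : ℝ≥0∞) / S a) l (𝓝 1) := by
    simpa using tendsto_const_nhds.add hC
  refine tendsto_of_tendsto_of_tendsto_of_le_of_le' hlow hup ?_ ?_ <;>
    filter_upwards [hx, hS.eventually_gt_atTop 0] with a ⟨hxS, hSx⟩ hS₀ <;>
    have hS₀' : (S a : ℝ≥0∞) ≠ 0 := by exact_mod_cast hS₀.ne'
  · rw [tsub_le_iff_right, ENNReal.div_add_div_same, ENNReal.le_div_iff_mul_le (.inl hS₀')
      (.inl (natCast_ne_top _)), one_mul]
    exact_mod_cast hSx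
  · rw [← ENNReal.div_self hS₀' (natCast_ne_top _), ENNReal.div_add_div_same]
    exact ENNReal.div_le_div_right (by exact_mod_cast hxS) _

lemma tendsto_natCast_pow_mul_div {α : Type*} {l : Filter α} {x y S : α → ℕ} (n : ℕ)
    (hx : Tendsto (fun a => (x a : ℝ≥0∞) / S a) l (𝓝 1))
    (hy : Tendsto (fun a => (y a : ℝ≥0∞) / S a) l (𝓝 1)) :
    Tendsto (fun a => ((x a ^ n * y a : ℕ) : ℝ≥0∞) / (S a ^ (n + 1) : ℕ)) l (𝓝 1) := by
  have h := ENNReal.Tendsto.mul (ENNReal.Tendsto.pow (n := n) hx) (.inl (by simp)) hy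
    (.inl one_ne_zero)
  rw [one_pow, one_mul] at h
  refine h.congr fun a => ?_
  simp only [div_eq_mul_inv, mul_pow, Nat.cast_mul, Nat.cast_pow, pow_succ]
  rw [ENNReal.mul_inv (.inr (natCast_ne_top _)) (.inl (by simp)), ENNReal.inv_pow]
  ring

lemma le_liminf_of_tendsto_mul_le {α : Type*} {l : Filter α} [l.NeBot] {ρ f : α → ℝ≥0∞}
    {c : ℝ≥0∞} (hρ : Tendsto ρ l (𝓝 1)) (h : ∀ᶠ a in l, ρ a * c ≤ f a) :
    c ≤ liminf f l := by
  have hρc : Tendsto (fun a => ρ a * c) l (𝓝 c) := by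
    simpa using ENNReal.Tendsto.mul_const hρ (.inl one_ne_zero)
  exact hρc.liminf_eq.ge.trans (liminf_le_liminf h)

lemma limsup_le_of_tendsto_le_mul {α : Type*} {l : Filter α} [l.NeBot] {ρ f : α → ℝ≥0∞}
    {c : ℝ≥0∞} (hρ : Tendsto ρ l (𝓝 1)) (h : ∀ᶠ a in l, f a ≤ ρ a * c) :
    limsup f l ≤ c := by
  have hρc : Tendsto (fun a => ρ a * c) l (𝓝 c) := by
    simpa using ENNReal.Tendsto.mul_const hρ (.inl one_ne_zero)
  exact (limsup_le_limsup h).trans hρc.limsup_eq.le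

lemma natCast_mul_div_mul_div_cancel {A W V : ℕ} (K : ℝ≥0∞) (hW : W ≠ 0) :
    ((A * W : ℕ) : ℝ≥0∞) / V * (K / W) = A * K / V := by
  have hW₀ : (W : ℝ≥0∞) ≠ 0 := by exact_mod_cast hW
  simp only [div_eq_mul_inv, Nat.cast_mul]
  calc (A : ℝ≥0∞) * W * (V : ℝ≥0∞)⁻¹ * (K * (W : ℝ≥0∞)⁻¹)
      = A * K * (V : ℝ≥0∞)⁻¹ * (W * (W : ℝ≥0∞)⁻¹) := by ring
    _ = A * K * (V : ℝ≥0∞)⁻¹ := by rw [ENNReal.mul_inv_cancel hW₀ (natCast_ne_top W), mul_one]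

end ENNReal

section Boxes

variable {ι : Type*}
open Function

def intBox (l : ι → ℤ) (m : ℤ) (s t : ℕ) : Set ((ι → ℤ) × ℤ) :=
  (univ.pi fun j => Ico (l j) (l j + s)) ×ˢ Ico m (m + t)

lemma Int.mem_Ico_iff_ediv_eq {x m k t : ℤ} (ht : 0 < t) :
    x ∈ Ico (m + k * t) (m + k * t + t) ↔ (x - m) / t = k := by
  rw [Int.ediv_eq_iff_of_pos ht, mem_Ico]
  constructor <;> rintro ⟨h₁, h₂⟩ <;> constructor <;> linarith

lemma Int.mem_Ico_iff_ediv_mem_Ico {y a : ℤ} {u n : ℕ} (hu : 0 < u) :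
    y ∈ Ico a (a + ↑(n * u)) ↔ (y - a) / u ∈ Ico (0 : ℤ) n := by
  have hu' : (0 : ℤ) < u := by exact_mod_cast hu
  rw [mem_Ico, mem_Ico, Int.le_ediv_iff_mul_le hu', Int.ediv_lt_iff_lt_mul hu']
  push_cast
  constructor <;> rintro ⟨h₁, h₂⟩ <;> constructor <;> linarith

def intBoxTile (l : ι → ℤ) (m : ℤ) (s t : ℕ) {p q : ℕ} (i : (ι → Fin p) × Fin q) :
    Set ((ι → ℤ) × ℤ) :=
  intBox (fun j => l j + (i.1 j : ℤ) * s) (m + (i.2 : ℤ) * t) s t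

lemma mem_intBoxTile_iff {l : ι → ℤ} {m : ℤ} {s t p q : ℕ} (hs : 0 < s) (ht : 0 < t)
    (i : (ι → Fin p) × Fin q) (x : (ι → ℤ) × ℤ) :
    x ∈ intBoxTile l m s t i ↔
      (∀ j, (x.1 j - l j) / s = i.1 j) ∧ (x.2 - m) / t = i.2 := by
  simp only [intBoxTile, intBox, mem_prod, mem_univ_pi,
    Int.mem_Ico_iff_ediv_eq (Int.natCast_pos.mpr hs),
    Int.mem_Ico_iff_ediv_eq (Int.natCast_pos.mpr ht)]

lemma intBox_mul_eq_iUnion {l : ι → ℤ} {m : ℤ} {s t p q : ℕ} (hs : 0 < s) (ht : 0 < t) :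
    intBox l m (p * s) (q * t) = ⋃ i : (ι → Fin p) × Fin q, intBoxTile l m s t i := by
  ext x
  simp only [mem_iUnion, mem_intBoxTile_iff hs ht, intBox, mem_prod, mem_univ_pi,
    Int.mem_Ico_iff_ediv_mem_Ico hs, Int.mem_Ico_iff_ediv_mem_Ico ht, mem_Ico]
  constructor
  · rintro ⟨hl, hm⟩
    refine ⟨(fun j => ⟨((x.1 j - l j) / s).toNat, by have := hl j; omega⟩,
      ⟨((x.2 - m) / t).toNat, by omega⟩), fun j => ?_, ?_⟩
    · have := hl j; simp only; omega
    · simp only; omega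
  · rintro ⟨i, hl, hm⟩
    exact ⟨fun j => by rw [hl j]; omega, by rw [hm]; omega⟩

lemma pairwiseDisjoint_intBoxTile {l : ι → ℤ} {m : ℤ} {s t p q : ℕ} (hs : 0 < s) (ht : 0 < t) :
    Pairwise (Disjoint on fun i : (ι → Fin p) × Fin q => intBoxTile l m s t i) := by
  intro i i' hii'
  refine Set.disjoint_left.mpr fun x hx hx' => hii' ?_
  rw [mem_intBoxTile_iff hs ht] at hx hx'
  ext1
  · funext j; exact Fin.ext (by exact_mod_cast (hx.1 j).symm.trans (hx'.1 j))
  · exact Fin.ext (by exact_mod_cast hx.2.symm.trans hx'.2)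

lemma measure_intBox_mul [Fintype ι] [DecidableEq ι] (μ : Measure ((ι → ℤ) × ℤ)) {l : ι → ℤ} {m : ℤ}
    {s t p q : ℕ} (hs : 0 < s) (ht : 0 < t) :
    μ (intBox l m (p * s) (q * t)) = ∑ i : (ι → Fin p) × Fin q, μ (intBoxTile l m s t i) := by
  rw [intBox_mul_eq_iUnion hs ht, measure_iUnion (pairwiseDisjoint_intBoxTile hs ht)
    fun _ => .of_discrete, tsum_fintype]

lemma encard_intBox [Fintype ι] [DecidableEq ι] (l : ι → ℤ) (m : ℤ) (s t : ℕ) :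
    (intBox l m s t).encard = (s ^ Fintype.card ι * t : ℕ) := by
  have : intBox l m s t =
      ↑(Fintype.piFinset (fun j => Finset.Ico (l j) (l j + s)) ×ˢ Finset.Ico m (m + t)) := by
    ext x; simp [intBox]
  rw [this, encard_coe_eq_coe_finsetCard, Finset.card_product, Fintype.card_piFinset]
  simp

lemma intBox_subset_intBox {l l' : ι → ℤ} {m m' : ℤ} {s t s' t' : ℕ}
    (hs : ∀ j, l' j ≤ l j ∧ l j + s ≤ l' j + s') (hm : m' ≤ m) (ht : m + t ≤ m' + t') :
    intBox l m s t ⊆ intBox l' m' s' t' :=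
  prod_mono (pi_mono fun j _ => Ico_subset_Ico (hs j).1 (hs j).2) (Ico_subset_Ico hm ht)

lemma intBoxTile_mul_eq (l : ι → ℤ) (σ : ℤ) (N s : ℕ) {p q : ℕ} (i : (ι → Fin p) × Fin q) :
    intBoxTile l (N * σ) s (N * s) i =
      intBox (fun j => l j + (i.1 j : ℤ) * s) (N * (σ + i.2 * s)) s (N * s) := by
  rw [intBoxTile, mul_add]
  push_cast
  ring_nf

variable [Fintype ι] [DecidableEq ι] (μ : Measure ((ι → ℤ) × ℤ))

lemma card_mul_le_measure_intBox_mul {l : ι → ℤ} {m : ℤ} {s t p q : ℕ} (hs : 0 < s) (ht : 0 < t)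
    {c : ℝ≥0∞} (hc : ∀ i : (ι → Fin p) × Fin q, c ≤ μ (intBoxTile l m s t i)) :
    (p ^ Fintype.card ι * q : ℕ) * c ≤ μ (intBox l m (p * s) (q * t)) := by
  rw [measure_intBox_mul μ hs ht, ← nsmul_eq_mul]
  simpa using Finset.card_nsmul_le_sum Finset.univ _ c fun i _ => hc i

lemma measure_intBox_mul_le_card_mul {l : ι → ℤ} {m : ℤ} {s t p q : ℕ} (hs : 0 < s)
    (ht : 0 < t) {c : ℝ≥0∞} (hc : ∀ i : (ι → Fin p) × Fin q, μ (intBoxTile l m s t i) ≤ c) :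
    μ (intBox l m (p * s) (q * t)) ≤ (p ^ Fintype.card ι * q : ℕ) * c := by
  rw [measure_intBox_mul μ hs ht, ← nsmul_eq_mul]
  simpa using Finset.sum_le_card_nsmul Finset.univ _ c fun i _ => hc i

end Boxes

section Cubes

variable {ι : Type*} (μ : Measure ((ι → ℤ) × ℤ))

noncomputable def cubeInf (S : ℕ) : ℝ≥0∞ := ⨅ c : (ι → ℤ) × ℤ, μ (intBox c.1 c.2 S S)

noncomputable def cubeSup (S : ℕ) : ℝ≥0∞ := ⨆ c : (ι → ℤ) × ℤ, μ (intBox c.1 c.2 S S)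

noncomputable def coarseCubeInf (N S : ℕ) : ℝ≥0∞ :=
  ⨅ c : (ι → ℤ) × ℤ, μ (intBox c.1 (N * c.2) S (N * S))

noncomputable def coarseCubeSup (N S : ℕ) : ℝ≥0∞ :=
  ⨆ c : (ι → ℤ) × ℤ, μ (intBox c.1 (N * c.2) S (N * S))

variable [Fintype ι] [DecidableEq ι]

lemma natCast_mul_cubeInf_le_coarseCubeInf {S : ℕ} (hS : 0 < S) (N : ℕ) :
    N * cubeInf μ S ≤ coarseCubeInf μ N S := by
  refine le_iInf fun c => ?_
  simpa using card_mul_le_measure_intBox_mul μ (l := c.1) (m := N * c.2) (p := 1) (q := N) hS hS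
    (c := cubeInf μ S) fun i => iInf_le_of_le (_, _) le_rfl

lemma coarseCubeSup_le_natCast_mul_cubeSup {S : ℕ} (hS : 0 < S) (N : ℕ) :
    coarseCubeSup μ N S ≤ N * cubeSup μ S := by
  refine iSup_le fun c => ?_
  simpa using measure_intBox_mul_le_card_mul μ (l := c.1) (m := N * c.2) (p := 1) (q := N) hS hS
    (c := cubeSup μ S) fun i => le_iSup_of_le (_, _) le_rfl

lemma card_mul_coarseCubeInf_le_cubeInf {N s S p q : ℕ} (hN : 0 < N) (hs : 0 < s)
    (hp : p * s ≤ S) (hq : q * (N * s) + N ≤ S) :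
    (p ^ Fintype.card ι * q : ℕ) * coarseCubeInf μ N s ≤ cubeInf μ S := by
  refine le_iInf fun c => ?_
  have hN' : (0 : ℤ) < N := by exact_mod_cast hN
  have h₁ := Int.ediv_mul_le c.2 hN'.ne'
  have h₂ := Int.lt_ediv_add_one_mul_self c.2 hN'
  calc _ ≤ μ (intBox c.1 (N * (c.2 / N + 1)) (p * s) (q * (N * s))) :=
        card_mul_le_measure_intBox_mul μ hs (by positivity) fun i => by
          rw [intBoxTile_mul_eq]; exact iInf_le_of_le (_, _) le_rfl
    _ ≤ μ (intBox c.1 c.2 S S) := by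
      refine measure_mono (intBox_subset_intBox (fun j => ⟨le_rfl, by omega⟩) ?_ ?_)
      · nlinarith
      · push_cast at hq ⊢; nlinarith

lemma cubeSup_le_card_mul_coarseCubeSup {N s S p q : ℕ} (hN : 0 < N) (hs : 0 < s)
    (hp : S ≤ p * s) (hq : S + N ≤ q * (N * s)) :
    cubeSup μ S ≤ (p ^ Fintype.card ι * q : ℕ) * coarseCubeSup μ N s := by
  refine iSup_le fun c => ?_
  have hN' : (0 : ℤ) < N := by exact_mod_cast hN
  have h₁ := Int.ediv_mul_le c.2 hN'.ne'
  have h₂ := Int.lt_ediv_add_one_mul_self c.2 hN'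
  calc μ (intBox c.1 c.2 S S) ≤ μ (intBox c.1 (N * (c.2 / N)) (p * s) (q * (N * s))) := by
        refine measure_mono (intBox_subset_intBox (fun j => ⟨le_rfl, by omega⟩) ?_ ?_)
        · nlinarith
        · push_cast at hq ⊢; nlinarith
    _ ≤ _ := measure_intBox_mul_le_card_mul μ hs (by positivity) fun i => by
          rw [intBoxTile_mul_eq]
          exact le_iSup_of_le (_, _) le_rfl

end Cubes

section Densities

variable {ι : Type*} [Fintype ι] [DecidableEq ι] (μ : Measure ((ι → ℤ) × ℤ)) {N : ℕ}
  {S : ℕ → ℕ}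

lemma cubeInf_div_le_coarseCubeInf_div (hN : 0 < N) {s : ℕ} (hs : 0 < s) :
    cubeInf μ s / (s ^ (Fintype.card ι + 1) : ℕ) ≤
      coarseCubeInf μ N s / (s ^ (Fintype.card ι + 1) * N : ℕ) := by
  have hN₀ : (N : ℝ≥0∞) ≠ 0 := by exact_mod_cast hN.ne'
  rw [← ENNReal.mul_div_mul_left _ _ hN₀ (ENNReal.natCast_ne_top N), Nat.cast_mul,
    mul_comm _ (N : ℝ≥0∞)]
  exact ENNReal.div_le_div_right (natCast_mul_cubeInf_le_coarseCubeInf μ hs N) _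

lemma coarseCubeSup_div_le_cubeSup_div (hN : 0 < N) {s : ℕ} (hs : 0 < s) :
    coarseCubeSup μ N s / (s ^ (Fintype.card ι + 1) * N : ℕ) ≤
      cubeSup μ s / (s ^ (Fintype.card ι + 1) : ℕ) := by
  have hN₀ : (N : ℝ≥0∞) ≠ 0 := by exact_mod_cast hN.ne'
  rw [← ENNReal.mul_div_mul_left (cubeSup μ s) _ hN₀ (ENNReal.natCast_ne_top N), Nat.cast_mul,
    mul_comm _ (N : ℝ≥0∞)]
  exact ENNReal.div_le_div_right (coarseCubeSup_le_natCast_mul_cubeSup μ hs N) _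

lemma coarseCubeInf_div_le_liminf (hN : 0 < N) (hS : Tendsto S atTop atTop) {s : ℕ} (hs : 0 < s) :
    coarseCubeInf μ N s / (s ^ (Fintype.card ι + 1) * N : ℕ) ≤
      liminf (fun R => cubeInf μ (S R) / (S R ^ (Fintype.card ι + 1) : ℕ)) atTop := by
  have hNs : 0 < N * s := Nat.mul_pos hN hs
  have hp R := Nat.div_mul_le_self (S R) s
  have hp' R := Nat.lt_div_mul_add (a := S R) hs
  have hq R := Nat.div_mul_le_self (S R - N) (N * s)
  have hq' R := Nat.lt_div_mul_add (a := S R - N) hNs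
  refine ENNReal.le_liminf_of_tendsto_mul_le (ENNReal.tendsto_natCast_pow_mul_div
    (x := fun R => S R / s * s) (y := fun R => (S R - N) / (N * s) * (N * s)) (Fintype.card ι)
    (ENNReal.tendsto_natCast_div_of_le_add s hS (.of_forall fun R => ?_))
    (ENNReal.tendsto_natCast_div_of_le_add (N * s + N) hS (.of_forall fun R => ?_))) ?_
  · exact ⟨by linarith [hp R], by linarith [hp' R]⟩
  · have := hq R; have := hq' R; constructor <;> omega
  filter_upwards [hS.eventually_ge_atTop N] with R hR
  rw [show (S R / s * s) ^ Fintype.card ι * ((S R - N) / (N * s) * (N * s)) =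
      (S R / s) ^ Fintype.card ι * ((S R - N) / (N * s)) * (s ^ (Fintype.card ι + 1) * N) by ring,
    ENNReal.natCast_mul_div_mul_div_cancel _ (by positivity)]
  refine ENNReal.div_le_div_right
    (card_mul_coarseCubeInf_le_cubeInf μ hN hs (hp R) (by have := hq R; omega)) _

lemma limsup_le_coarseCubeSup_div (hN : 0 < N) (hS : Tendsto S atTop atTop) {s : ℕ} (hs : 0 < s) :
    limsup (fun R => cubeSup μ (S R) / (S R ^ (Fintype.card ι + 1) : ℕ)) atTop ≤
      coarseCubeSup μ N s / (s ^ (Fintype.card ι + 1) * N : ℕ) := by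
  have hNs : 0 < N * s := Nat.mul_pos hN hs
  have hp R := Nat.div_mul_le_self (S R) s
  have hp' R := Nat.lt_div_mul_add (a := S R) hs
  have hq R := Nat.div_mul_le_self (S R + N) (N * s)
  have hq' R := Nat.lt_div_mul_add (a := S R + N) hNs
  refine ENNReal.limsup_le_of_tendsto_le_mul (ENNReal.tendsto_natCast_pow_mul_div
    (x := fun R => (S R / s + 1) * s) (y := fun R => ((S R + N) / (N * s) + 1) * (N * s))
    (Fintype.card ι)
    (ENNReal.tendsto_natCast_div_of_le_add s hS (.of_forall fun R => ?_))
    (ENNReal.tendsto_natCast_div_of_le_add (N * s + N) hS (.of_forall fun R => ?_)))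
    (.of_forall fun R => ?_)
  · have := hp R; have := hp' R; rw [add_one_mul]; constructor <;> omega
  · have := hq R; have := hq' R; rw [add_one_mul]; constructor <;> omega
  rw [show ((S R / s + 1) * s) ^ Fintype.card ι * (((S R + N) / (N * s) + 1) * (N * s)) =
      (S R / s + 1) ^ Fintype.card ι * ((S R + N) / (N * s) + 1) *
        (s ^ (Fintype.card ι + 1) * N) by rw [mul_pow]; ring,
    ENNReal.natCast_mul_div_mul_div_cancel _ (by positivity)]
  refine ENNReal.div_le_div_right (cubeSup_le_card_mul_coarseCubeSup μ hN hs ?_ ?_) _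
  · have := hp' R; rw [add_one_mul]; omega
  · have := hq' R; rw [add_one_mul]; omega

theorem liminf_cubeInf_div_eq (hN : 0 < N) (hS : Tendsto S atTop atTop) (hS₀ : ∀ R, 0 < S R) :
    liminf (fun R => cubeInf μ (S R) / (S R ^ (Fintype.card ι + 1) : ℕ)) atTop =
      liminf (fun R => coarseCubeInf μ N (S R) / (S R ^ (Fintype.card ι + 1) * N : ℕ)) atTop :=
  liminf_eq_liminf_of_le_of_le_liminf (fun R => cubeInf_div_le_coarseCubeInf_div μ hN (hS₀ R))
    fun r => coarseCubeInf_div_le_liminf μ hN hS (hS₀ r)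

theorem limsup_cubeSup_div_eq (hN : 0 < N) (hS : Tendsto S atTop atTop) (hS₀ : ∀ R, 0 < S R) :
    limsup (fun R => cubeSup μ (S R) / (S R ^ (Fintype.card ι + 1) : ℕ)) atTop =
      limsup (fun R => coarseCubeSup μ N (S R) / (S R ^ (Fintype.card ι + 1) * N : ℕ)) atTop :=
  limsup_eq_limsup_of_le_of_limsup_le (fun R => coarseCubeSup_div_le_cubeSup_div μ hN (hS₀ R))
    fun r => limsup_le_coarseCubeSup_div μ hN hS (hS₀ r)

end Densities

lemma exists_measure_eq_encard_preimage_inter {I X : Type*} [MeasurableSpace X]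
    [DiscreteMeasurableSpace X] (b : I → X) (J : Set I) :
    ∃ μ : Measure X, ∀ S, μ S = (b ⁻¹' S ∩ J).encard := by
  let : MeasurableSpace I := ⊤
  refine ⟨(Measure.count.restrict J).map b, fun S => ?_⟩
  rw [Measure.map_apply measurable_from_top .of_discrete,
    Measure.restrict_apply (MeasurableSpace.measurableSet_top),
    Measure.count_apply MeasurableSpace.measurableSet_top]

section Coarsening

variable {d : ℕ}

lemma srcBox_eq_intBox (R : ℕ) (c : (Fin d → ℤ) × ℤ) :
    srcBox d R c = intBox (fun j => c.1 j - R) (c.2 - R) (2 * R + 1) (2 * R + 1) := by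
  ext x
  simp only [srcBox, intBox, mem_ofPred_eq, mem_prod, mem_univ_pi, mem_Ico, abs_le]
  push_cast
  refine and_congr (forall_congr' fun j => ?_) ?_ <;> omega

lemma preimage_grpBox_eq_intBox {H : Type*} {N : ℕ} (hN : 0 < N)
    {U : (Fin d → ℤ) × ℤ → ((Fin d → ℤ) × ℤ) × H} (hU : ∀ x, (U x).1 = (x.1, Int.fdiv x.2 N))
    (R : ℕ) (γ : ((Fin d → ℤ) × ℤ) × H) :
    U ⁻¹' grpBox d R γ =
      intBox (fun j => γ.1.1 j - R) (N * (γ.1.2 - R)) (2 * R + 1) (N * (2 * R + 1)) := by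
  have hN' : (0 : ℤ) < N := by exact_mod_cast hN
  ext x
  simp only [grpBox, mem_preimage, mem_ofPred_eq, hU, intBox, mem_prod, mem_univ_pi, mem_Ico,
    Int.fdiv_eq_ediv_of_nonneg _ hN'.le, abs_le, le_sub_iff_add_le, Int.le_ediv_iff_mul_le hN',
    sub_le_iff_le_add, Int.ediv_le_iff_le_mul hN']
  push_cast
  refine and_congr (forall_congr' fun j => ?_) ?_
  · omega
  · constructor <;> rintro ⟨h₁, h₂⟩ <;> constructor <;> linarith

lemma encard_srcBox (R : ℕ) : (srcBox d R 0).encard = ((2 * R + 1) ^ (d + 1) : ℕ) := by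
  rw [srcBox_eq_intBox, encard_intBox, Fintype.card_fin, pow_succ]

lemma encard_grpBox {H : Type*} [Fintype H] [Zero H] (R : ℕ) :
    (grpBox d R (0 : ((Fin d → ℤ) × ℤ) × H)).encard =
      ((2 * R + 1) ^ (d + 1) * Fintype.card H : ℕ) := by
  rw [show grpBox d R (0 : ((Fin d → ℤ) × ℤ) × H) = srcBox d R 0 ×ˢ univ by
      ext; simp [grpBox, srcBox],
    encard_prod, encard_srcBox, encard_univ, ENat.card_eq_coe_fintype_card]
  norm_cast

lemma surjective_sub_natCast {ι : Type*} (R : ℕ) :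
    Function.Surjective fun c : (ι → ℤ) × ℤ => ((fun j => c.1 j - R), c.2 - R) :=
  fun c => ⟨(fun j => c.1 j + R, c.2 + R), by simp⟩

lemma iInf_measure_srcBox (μ : Measure ((Fin d → ℤ) × ℤ)) (R : ℕ) :
    ⨅ c, μ (srcBox d R c) = cubeInf μ (2 * R + 1) := by
  simp only [srcBox_eq_intBox]
  exact (surjective_sub_natCast R).iInf_comp fun c => μ (intBox c.1 c.2 _ _)

lemma iSup_measure_srcBox (μ : Measure ((Fin d → ℤ) × ℤ)) (R : ℕ) :
    ⨆ c, μ (srcBox d R c) = cubeSup μ (2 * R + 1) := by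
  simp only [srcBox_eq_intBox]
  exact (surjective_sub_natCast R).iSup_comp fun c => μ (intBox c.1 c.2 _ _)

variable {H : Type*} [Nonempty H] {N : ℕ} (hN : 0 < N)
  {U : (Fin d → ℤ) × ℤ → ((Fin d → ℤ) × ℤ) × H} (hU : ∀ x, (U x).1 = (x.1, Int.fdiv x.2 N))
include hN hU

lemma iInf_measure_preimage_grpBox (μ : Measure ((Fin d → ℤ) × ℤ)) (R : ℕ) :
    ⨅ γ, μ (U ⁻¹' grpBox d R γ) = coarseCubeInf μ N (2 * R + 1) := by
  simp only [preimage_grpBox_eq_intBox hN hU]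
  exact ((surjective_sub_natCast R).comp Prod.fst_surjective).iInf_comp
    fun c => μ (intBox c.1 (N * c.2) _ _)

lemma iSup_measure_preimage_grpBox (μ : Measure ((Fin d → ℤ) × ℤ)) (R : ℕ) :
    ⨆ γ, μ (U ⁻¹' grpBox d R γ) = coarseCubeSup μ N (2 * R + 1) := by
  simp only [preimage_grpBox_eq_intBox hN hU]
  exact ((surjective_sub_natCast R).comp Prod.fst_surjective).iSup_comp
    fun c => μ (intBox c.1 (N * c.2) _ _)

end Coarsening

section PointDensities

variable {I : Type*} {d : ℕ} {J : Set I} {μ : Measure ((Fin d → ℤ) × ℤ)}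

lemma srcLowerDensity_eq_liminf {b : I → (Fin d → ℤ) × ℤ}
    (hμ : ∀ S, μ S = (b ⁻¹' S ∩ J).encard) :
    srcLowerDensity d b J =
      liminf (fun R => cubeInf μ (2 * R + 1) / ((2 * R + 1) ^ (d + 1) : ℕ)) atTop := by
  simp only [srcLowerDensity, ← hμ, encard_srcBox, ENat.toENNReal_coe]
  congr 1; funext R
  rw [← iInf_measure_srcBox, ENNReal.iInf_div_of_ne (by simp) (ENNReal.natCast_ne_top _)]

lemma srcUpperDensity_eq_limsup {b : I → (Fin d → ℤ) × ℤ}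
    (hμ : ∀ S, μ S = (b ⁻¹' S ∩ J).encard) :
    srcUpperDensity d b J =
      limsup (fun R => cubeSup μ (2 * R + 1) / ((2 * R + 1) ^ (d + 1) : ℕ)) atTop := by
  simp only [srcUpperDensity, ← hμ, encard_srcBox, ENat.toENNReal_coe]
  congr 1; funext R
  rw [← iSup_measure_srcBox, ENNReal.iSup_div]

variable {H : Type*} [Fintype H] [Zero H] {N : ℕ} (hN : 0 < N)
  {U : (Fin d → ℤ) × ℤ → ((Fin d → ℤ) × ℤ) × H} (hU : ∀ x, (U x).1 = (x.1, Int.fdiv x.2 N))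
  {a : I → ((Fin d → ℤ) × ℤ) × H}
include hN hU

lemma grpLowerDensity_eq_liminf (ha : ∀ S, ((a ⁻¹' S ∩ J).encard : ℝ≥0∞) = μ (U ⁻¹' S)) :
    grpLowerDensity d a J = liminf (fun R => coarseCubeInf μ N (2 * R + 1) /
      ((2 * R + 1) ^ (d + 1) * Fintype.card H : ℕ)) atTop := by
  simp only [grpLowerDensity, ha, encard_grpBox, ENat.toENNReal_coe]
  congr 1; funext R
  rw [← iInf_measure_preimage_grpBox hN hU, ENNReal.iInf_div_of_ne (by simp [Fintype.card_ne_zero])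
    (ENNReal.natCast_ne_top _)]

lemma grpUpperDensity_eq_limsup (ha : ∀ S, ((a ⁻¹' S ∩ J).encard : ℝ≥0∞) = μ (U ⁻¹' S)) :
    grpUpperDensity d a J = limsup (fun R => coarseCubeSup μ N (2 * R + 1) /
      ((2 * R + 1) ^ (d + 1) * Fintype.card H : ℕ)) atTop := by
  simp only [grpUpperDensity, ha, encard_grpBox, ENat.toENNReal_coe]
  congr 1; funext R
  rw [← iSup_measure_preimage_grpBox hN hU, ENNReal.iSup_div]

end PointDensities

theorem density_coarsening_invariance_general
    {I : Type*} (d : ℕ) (N : ℕ) (hN : 0 < N)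
    {H : Type*} [Fintype H] [AddCommGroup H] (hcard : Fintype.card H = N)
    (u : ZMod N → H)
    (U : (Fin d → ℤ) × ℤ → ((Fin d → ℤ) × ℤ) × H)
    (hU : ∀ k : Fin d → ℤ, ∀ m : ℤ,
      U (k, m) = ((k, Int.fdiv m N), u (m : ZMod N)))
    (a : I → ((Fin d → ℤ) × ℤ) × H)
    (b : I → (Fin d → ℤ) × ℤ) (hb : ∀ i, U (b i) = a i) :
    ∀ J : Set I,
      srcLowerDensity d b J = grpLowerDensity d a J ∧
      srcUpperDensity d b J = grpUpperDensity d a J := by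
  intro J
  obtain ⟨μ, hμ⟩ := exists_measure_eq_encard_preimage_inter b J
  have ha : ∀ S, ((a ⁻¹' S ∩ J).encard : ℝ≥0∞) = μ (U ⁻¹' S) := fun S => by
    rw [hμ, ← preimage_comp, show U ∘ b = a from funext hb]
  have hU₁ : ∀ x, (U x).1 = (x.1, Int.fdiv x.2 N) := fun x => by rw [hU]
  have hS : Tendsto (fun R : ℕ => 2 * R + 1) atTop atTop :=
    tendsto_atTop_mono (fun R => by simp only [id]; omega) tendsto_id
  rw [srcLowerDensity_eq_liminf hμ, grpLowerDensity_eq_liminf hN hU₁ ha,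
    srcUpperDensity_eq_limsup hμ, grpUpperDensity_eq_limsup hN hU₁ ha, hcard]
  simpa using And.intro (liminf_cubeInf_div_eq μ hN hS fun R => Nat.succ_pos (2 * R))
    (limsup_cubeSup_div_eq μ hN hS fun R => Nat.succ_pos (2 * R))

/-- Coarsening the group does not change densities: with `H` finite
abelian of order `N`, `U : ℤ^{d+1} → G = ℤ^{d+1} × H`,
`(k, m) ↦ ((k, ⌊m/N⌋), u(m mod N))` (a bijection), and `b = U⁻¹ ∘ a`, one has
`D⁻(b;J) = D⁻(a;J)` and `D⁺(b;J) = D⁺(a;J)` for every `J ⊆ I`. -/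
theorem density_coarsening_invariance
    {I : Type*} (d : ℕ) (N : ℕ) (hN : 0 < N)
    {H : Type*} [Fintype H] [AddCommGroup H] (hcard : Fintype.card H = N)
    (u : ZMod N → H) (hu : Function.Bijective u)
    (U : (Fin d → ℤ) × ℤ → ((Fin d → ℤ) × ℤ) × H)
    (hU : ∀ k : Fin d → ℤ, ∀ m : ℤ,
      U (k, m) = ((k, Int.fdiv m N), u (m : ZMod N)))
    (hUbij : Function.Bijective U)
    (a : I → ((Fin d → ℤ) × ℤ) × H)
    (b : I → (Fin d → ℤ) × ℤ) (hb : ∀ i, U (b i) = a i) :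
    ∀ J : Set I,
      srcLowerDensity d b J = grpLowerDensity d a J ∧
      srcUpperDensity d b J = grpUpperDensity d a J :=
  density_coarsening_invariance_general d N hN hcard u U hU a b hb
end

section
/- In ℓ₂(ℤ), define T₄ on the standard orthonormal basis by T₄e_n = e_n + e_{2n}. Then: (a) ‖T₄e_n‖ ≥ √2 for all n (with ‖T₄e_0‖ = 2); (b) T₄ is bounded with ‖T₄‖ = 2; (c) the family {T₄e_n}_{n∈ℤ} is not a Riesz sequence, since ‖∑_{n=1}^N (−1)ⁿ T₄e_{2ⁿ}‖² = 2 for all N ≥ 1 while the coefficient ℓ²-norm squared equals N. -/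
/-!
`T₄ = I + S`, where `S` is the isometry `e_n ↦ e_{2n}`, so `‖T₄‖ ≤ 2`, with equality attained at
`e_0`, the only fixed point of doubling. For `n ≠ 0` the vectors `e_n`, `e_{2n}` are orthonormal,
so `‖T₄ e_n‖ = √2`. Along the chain `e_{2ⁿ}` the alternating sum `∑_{n=1}^N (-1)ⁿ T₄ e_{2ⁿ}`
telescopes to `(-1)ᴺ e_{2^{N+1}} - e_2`, of squared norm `2`, while its coefficients have squared
`ℓ²`-norm `N`; hence no lower Riesz bound can hold.
-/

open Finset
open scoped lp

theorem Finset.sum_Icc_neg_one_pow_smul_add_succ {R M : Type*} [Ring R] [AddCommGroup M]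
    [Module R M] (v : ℕ → M) (N : ℕ) :
    ∑ n ∈ Icc 1 N, (-1 : R) ^ n • (v n + v (n + 1)) = (-1 : R) ^ N • v (N + 1) - v 1 := by
  have key : ∀ n, (-1 : R) ^ n • (v n + v (n + 1))
      = (-1 : R) ^ (n + 2) • v (n + 1) - (-1 : R) ^ (n + 1) • v n := by
    intro n
    simp only [pow_succ, smul_add, mul_neg_one, neg_neg, neg_smul, sub_neg_eq_add]
    abel
  rw [← Ico_add_one_right_eq_Icc, sum_congr rfl fun n _ => key n,
    sum_Ico_sub (fun n => (-1 : R) ^ (n + 1) • v n) (by omega)]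
  simp [pow_succ]

theorem Finsupp.sum_support_embDomain_indicator {α β M N : Type*} [Zero M] [AddCommMonoid N]
    (g : α ↪ β) (s : Finset α) (c : α → M) {F : β → M → N} (hF : ∀ i, F i 0 = 0) :
    ∑ i ∈ (embDomain g (indicator s fun n _ => c n)).support,
        F i (embDomain g (indicator s fun n _ => c n) i) = ∑ n ∈ s, F (g n) (c n) := by
  change Finsupp.sum _ F = _
  rw [sum_embDomain, sum_of_support_subset _ (support_indicator_subset _ _) _ fun i _ => hF _]
  exact Finset.sum_congr rfl fun n hn => by rw [indicator_of_mem hn]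

theorem not_exists_lower_riesz_bound {ι 𝕜 E : Type*} [NormedField 𝕜]
    [SeminormedAddCommGroup E] [Module 𝕜 E] {f : ι → E} {c : ℝ}
    (h : ∀ N : ℕ, ∃ a : ι →₀ 𝕜,
      N ≤ ∑ i ∈ a.support, ‖a i‖ ^ 2 ∧ ‖∑ i ∈ a.support, a i • f i‖ ^ 2 ≤ c) :
    ¬ ∃ A, 0 < A ∧ ∀ a : ι →₀ 𝕜,
      A * ∑ i ∈ a.support, ‖a i‖ ^ 2 ≤ ‖∑ i ∈ a.support, a i • f i‖ ^ 2 := by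
  rintro ⟨A, hA, hlower⟩
  obtain ⟨N, hN⟩ := exists_nat_gt (c / A)
  obtain ⟨a, hcoeff, himage⟩ := h N
  rw [div_lt_iff₀ hA, mul_comm] at hN
  exact lt_irrefl c <| hN.trans_le <|
    (mul_le_mul_of_nonneg_left hcoeff hA.le).trans <| (hlower a).trans himage

section Orthonormal

variable {𝕜 E : Type*} [RCLike 𝕜] [NormedAddCommGroup E] [InnerProductSpace 𝕜 E]

theorem Orthonormal.norm_smul_add_smul_sq {ι : Type*} {v : ι → E} (hv : Orthonormal 𝕜 v)
    {i j : ι} (hij : i ≠ j) (a b : 𝕜) : ‖a • v i + b • v j‖ ^ 2 = ‖a‖ ^ 2 + ‖b‖ ^ 2 := by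
  rw [@norm_add_sq 𝕜, inner_smul_left, inner_smul_right, hv.inner_eq_zero hij, norm_smul,
    norm_smul, hv.norm_eq_one, hv.norm_eq_one]
  simp

theorem Orthonormal.norm_sum_Icc_neg_one_pow_smul_add_succ_sq {v : ℕ → E}
    (hv : Orthonormal 𝕜 v) {N : ℕ} (hN : 1 ≤ N) :
    ‖∑ n ∈ Icc 1 N, (-1 : 𝕜) ^ n • (v n + v (n + 1))‖ ^ 2 = 2 := by
  rw [sum_Icc_neg_one_pow_smul_add_succ, sub_eq_add_neg, ← neg_one_smul 𝕜 (v 1),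
    hv.norm_smul_add_smul_sq (by omega)]
  norm_num

end Orthonormal

namespace lp

variable {ι 𝕜 : Type*} [RCLike 𝕜] [DecidableEq ι]

theorem orthonormal_single : Orthonormal 𝕜 fun i : ι => lp.single 2 i (1 : 𝕜) := by
  rw [orthonormal_iff_ite]
  intro i j
  rw [lp.inner_single_left]
  simp [lp.single_apply, Pi.single_apply]

theorem norm_single_add_single {i j : ι} (hij : i ≠ j) :
    ‖(lp.single 2 i 1 + lp.single 2 j 1 : ℓ²(ι, 𝕜))‖ = √2 := by
  rw [eq_comm, Real.sqrt_eq_iff_eq_sq zero_le_two (norm_nonneg _), eq_comm]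
  simpa [one_add_one_eq_two] using
    (orthonormal_single (𝕜 := 𝕜)).norm_smul_add_smul_sq hij 1 1

theorem ext_single {F : Type*} [AddCommMonoid F] [Module 𝕜 F] [TopologicalSpace F] [T2Space F]
    {f g : ℓ²(ι, 𝕜) →L[𝕜] F} (h : ∀ i, f (lp.single 2 i 1) = g (lp.single 2 i 1)) : f = g :=
  lp.ext_continuousLinearMap ENNReal.ofNat_ne_top fun i =>
    ContinuousLinearMap.ext_ring (h i)

variable {κ : Type*} [DecidableEq κ]

noncomputable def mapDomainIsometry (φ : ι ↪ κ) : ℓ²(ι, 𝕜) →ₗᵢ[𝕜] ℓ²(κ, 𝕜) :=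
  (orthonormal_single.comp φ φ.injective).orthogonalFamily.linearIsometry

theorem mapDomainIsometry_single (φ : ι ↪ κ) (i : ι) (c : 𝕜) :
    mapDomainIsometry φ (lp.single 2 i c) = lp.single 2 (φ i) c := by
  rw [mapDomainIsometry, OrthogonalFamily.linearIsometry_apply_single]
  simp [← lp.single_smul]

end lp

theorem ContinuousLinearMap.norm_id_add_linearIsometry_le {𝕜 E : Type*}
    [NontriviallyNormedField 𝕜] [SeminormedAddCommGroup E] [NormedSpace 𝕜 E] (S : E →ₗᵢ[𝕜] E) :
    ‖ContinuousLinearMap.id 𝕜 E + S.toContinuousLinearMap‖ ≤ 2 := by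
  calc _ ≤ ‖ContinuousLinearMap.id 𝕜 E‖ + ‖S.toContinuousLinearMap‖ := norm_add_le _ _
    _ ≤ 1 + 1 := add_le_add norm_id_le S.norm_toContinuousLinearMap_le
    _ = 2 := one_add_one_eq_two

noncomputable def T₄ : ℓ²(ℤ, ℂ) →L[ℂ] ℓ²(ℤ, ℂ) :=
  .id ℂ _ +
    (lp.mapDomainIsometry ⟨(2 * ·), mul_right_injective₀ two_ne_zero⟩).toContinuousLinearMap

theorem T₄_single (n : ℤ) :
    T₄ (lp.single 2 n 1) = lp.single 2 n 1 + lp.single 2 (2 * n) 1 := by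
  simp [T₄, lp.mapDomainIsometry_single]

theorem norm_T₄_le : ‖T₄‖ ≤ 2 :=
  ContinuousLinearMap.norm_id_add_linearIsometry_le _

/-- In `ℓ₂(ℤ)` the operator `T₄ e_n = e_n + e_{2n}` satisfies
`‖T₄ e_n‖ ≥ √2` (with `‖T₄ e_0‖ = 2`), is bounded with `‖T₄‖ = 2`, and `{T₄ e_n}` is not
a Riesz sequence: `‖∑_{n=1}^N (−1)ⁿ T₄ e_{2ⁿ}‖² = 2` for all `N ≥ 1` while the coefficient
`ℓ²`-norm squared is `N`. -/
theorem T4_bounded_not_riesz :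
    (∃ T : lp (fun _ : ℤ => ℂ) 2 →L[ℂ] lp (fun _ : ℤ => ℂ) 2,
      ∀ n : ℤ, T (lp.single 2 n (1 : ℂ)) =
        lp.single 2 n (1 : ℂ) + lp.single 2 (2 * n) (1 : ℂ)) ∧
    ∀ T : lp (fun _ : ℤ => ℂ) 2 →L[ℂ] lp (fun _ : ℤ => ℂ) 2,
      (∀ n : ℤ, T (lp.single 2 n (1 : ℂ)) =
        lp.single 2 n (1 : ℂ) + lp.single 2 (2 * n) (1 : ℂ)) →
      (∀ n : ℤ, Real.sqrt 2 ≤ ‖T (lp.single 2 n (1 : ℂ))‖) ∧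
      ‖T (lp.single 2 (0 : ℤ) (1 : ℂ))‖ = 2 ∧
      ‖T‖ = 2 ∧
      (∀ N : ℕ, 1 ≤ N →
        ‖∑ n ∈ Finset.Icc 1 N, ((-1 : ℂ) ^ n) • T (lp.single 2 ((2 : ℤ) ^ n) (1 : ℂ))‖ ^ 2
          = 2) ∧
      ¬ ∃ A B : ℝ, 0 < A ∧ A ≤ B ∧
        ∀ a : ℤ →₀ ℂ,
          A * ∑ i ∈ a.support, ‖a i‖ ^ 2
              ≤ ‖∑ i ∈ a.support, a i • T (lp.single 2 i (1 : ℂ))‖ ^ 2 ∧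
          ‖∑ i ∈ a.support, a i • T (lp.single 2 i (1 : ℂ))‖ ^ 2
              ≤ B * ∑ i ∈ a.support, ‖a i‖ ^ 2 := by
  refine ⟨⟨T₄, T₄_single⟩, fun T hT => ?_⟩
  have hT₀ : ‖T (lp.single 2 0 1)‖ = 2 := by
    rw [hT, mul_zero, ← two_smul ℂ, norm_smul, lp.norm_single zero_lt_two]
    norm_num
  let pow2 : ℕ ↪ ℤ := ⟨(2 ^ ·), pow_right_injective₀ two_pos (by norm_num)⟩
  have hsigns : ∀ N : ℕ, 1 ≤ N →
      ‖∑ n ∈ Icc 1 N, (-1 : ℂ) ^ n • T (lp.single 2 ((2 : ℤ) ^ n) 1)‖ ^ 2 = 2 := by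
    intro N hN
    simp only [hT, ← pow_succ']
    exact (lp.orthonormal_single.comp pow2 pow2.injective).norm_sum_Icc_neg_one_pow_smul_add_succ_sq
      hN
  refine ⟨fun n => ?_, hT₀, ?_, hsigns, ?_⟩
  · rcases eq_or_ne n 0 with rfl | hn
    · rw [hT₀, Real.sqrt_le_iff]
      norm_num
    · rw [hT, lp.norm_single_add_single (by omega)]
  · have hle : ‖T‖ ≤ 2 :=
      lp.ext_single (fun n => (hT n).trans (T₄_single n).symm) ▸ norm_T₄_le
    have hge : 2 ≤ ‖T‖ := by
      simpa [hT₀, lp.norm_single] using T.le_opNorm (lp.single 2 0 1)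
    exact le_antisymm hle hge
  · rintro ⟨A, B, hA, -, hbounds⟩
    refine not_exists_lower_riesz_bound (c := 2) (fun N => ?_) ⟨A, hA, fun a => (hbounds a).1⟩
    refine ⟨.embDomain pow2 (.indicator (Icc 1 (N + 1)) fun n _ => (-1 : ℂ) ^ n), ?_, ?_⟩
    · rw [Finsupp.sum_support_embDomain_indicator (F := fun _ c => ‖c‖ ^ 2) _ _ _ (by simp)]
      simp
    · rw [Finsupp.sum_support_embDomain_indicator (F := fun i c => c • T (lp.single 2 i 1)) _ _ _
        fun _ => zero_smul ℂ _]
      exact (hsigns _ le_add_self).le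
end

section
/- Let I = ℤ, 𝒢 = {e_k}_{k∈ℤ} an orthonormal basis of H, and f_i = f = ∑_{m∈ℤ} 2^{−|m|} e_m for every i ∈ ℤ, with localization map a : ℤ → ℤ, a(i) = 0. Then (𝓕, a, 𝒢) is ℓ¹-localized and D⁻(a;ℤ) = 0, but the index-free lower density D⁻(𝓕;𝒢) = liminf_{R→∞} inf_{k∈ℤ} [∑_{i∈ℤ} a_f ∑_{n∈B_R(k)} |⟨f, e_{n−k}⟩|²]/|B_R(0)| is infinite. -/
open Filter Set
open scoped ENNReal NNReal

def box1 (R : ℕ) (k : ℤ) : Set ℤ := {n | |n - k| ≤ (R : ℤ)}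

noncomputable def lowerDensity1 {I : Type*} (a : I → ℤ) (J : Set I) : ℝ≥0∞ :=
  Filter.liminf (fun R : ℕ =>
    ⨅ k, ((a ⁻¹' box1 R k ∩ J).encard : ℝ≥0∞) / ((box1 R 0).encard : ℝ≥0∞)) atTop

/-!
Expanding `f` in the basis gives `|⟨f, e_n⟩| = 2^{-|n|}`, which is summable over `ℤ`. Since
`a ≡ 0`, a box of radius `R` centred at `R + 1` contains no `a(i)`, so `D⁻(a;ℤ) = 0`. In the
index-free density, however, every index `i` contributes the same positive amount (the box around
`k` contains `n = k`, contributing `|⟨f, e_0⟩|² = 1`), and there are infinitely many `i`.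
-/

open scoped InnerProductSpace

theorem box1_eq_Icc (R : ℕ) (k : ℤ) : box1 R k = Icc (k - R) (k + R) := by
  ext n
  simp only [box1, mem_ofPred_eq, abs_le, mem_Icc]
  omega

theorem encard_box1_ne_top (R : ℕ) (k : ℤ) : (box1 R k).encard ≠ ⊤ := by
  rw [box1_eq_Icc]
  exact (finite_Icc _ _).encard_lt_top.ne

theorem lowerDensity1_const_eq_zero {I : Type*} (c : ℤ) (J : Set I) :
    lowerDensity1 (fun _ : I => c) J = 0 := by
  have hR : ∀ R : ℕ, ⨅ k, (((fun _ : I => c) ⁻¹' box1 R k ∩ J).encard : ℝ≥0∞) /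
      ((box1 R 0).encard : ℝ≥0∞) = 0 := by
    intro R
    -- a box centred at `c + R + 1` misses the only value `c` of the map
    have hempty : (fun _ : I => c) ⁻¹' box1 R (c + R + 1) ∩ J = ∅ := by
      ext i
      simp only [box1_eq_Icc, mem_inter_iff, mem_preimage, mem_Icc, mem_empty_iff_false,
        iff_false]
      omega
    refine le_antisymm (iInf_le_of_le (c + R + 1) ?_) zero_le
    simp [hempty]
  simp only [lowerDensity1, hR, liminf_const]

theorem summable_two_zpow_neg_abs : Summable fun k : ℤ => (2 : ℝ≥0) ^ (-|k|) := by
  have habs : ∀ k : ℤ, (2 : ℝ) ^ (-|k|) = 2⁻¹ ^ k.natAbs := by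
    intro k
    rw [zpow_neg, Int.abs_eq_natAbs, zpow_natCast, inv_pow]
  have hgeom : Summable fun n : ℕ => (2⁻¹ : ℝ) ^ n :=
    summable_geometric_of_lt_one (by norm_num) (by norm_num)
  rw [← NNReal.summable_coe]
  push_cast
  refine Summable.of_nat_of_neg ?_ ?_ <;>
    simpa only [habs, Int.natAbs_neg, Int.natAbs_natCast] using hgeom

section InnerProductSpace

variable {𝕜 E : Type*} [RCLike 𝕜] [NormedAddCommGroup E] [InnerProductSpace 𝕜 E]

theorem Orthonormal.inner_left_eq_of_hasSum {ι : Type*} {v : ι → E} (hv : Orthonormal 𝕜 v)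
    {c : ι → 𝕜} {x : E} (hx : HasSum (fun j => c j • v j) x) (i : ι) : ⟪v i, x⟫_𝕜 = c i := by
  have hmap := hx.mapL (innerSL 𝕜 (v i))
  refine (hmap.unique (hasSum_single i fun j hj => ?_)).trans ?_
  · simp [hv.2 hj.symm]
  · simp [inner_self_eq_norm_sq_to_K, hv.1 i]

theorem Orthonormal.tsum_nnnorm_inner_sq_ne_top {ι : Type*} {v : ι → E} (hv : Orthonormal 𝕜 v)
    (x : E) :
    ∑' i, (‖⟪x, v i⟫_𝕜‖₊ : ℝ≥0∞) ^ 2 ≠ ⊤ := by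
  have hsum : Summable fun i => ‖⟪x, v i⟫_𝕜‖₊ ^ 2 := by
    rw [← NNReal.summable_coe]
    simpa only [NNReal.coe_pow, coe_nnnorm, norm_inner_symm] using hv.inner_products_summable x
  simpa only [ENNReal.coe_pow] using ENNReal.tsum_coe_ne_top_iff_summable.mpr hsum

theorem liminf_iInf_constFamily_density_eq_top {I : Type*} [Infinite I] {v : ℤ → E}
    (hv : Orthonormal 𝕜 v) {x : E} (hx : ⟪x, v 0⟫_𝕜 ≠ 0) :
    liminf (fun R : ℕ => ⨅ k : ℤ,
        (∑' _i : I, (∑' n : ℤ, (‖⟪x, v n⟫_𝕜‖₊ : ℝ≥0∞) ^ 2)⁻¹ *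
          ∑' n : box1 R k, (‖⟪x, v ((n : ℤ) - k)⟫_𝕜‖₊ : ℝ≥0∞) ^ 2) /
          ((box1 R 0).encard : ℝ≥0∞)) atTop = ⊤ := by
  have hterm : ∀ (R : ℕ) (k : ℤ),
      (∑' _i : I, (∑' n : ℤ, (‖⟪x, v n⟫_𝕜‖₊ : ℝ≥0∞) ^ 2)⁻¹ *
        ∑' n : box1 R k, (‖⟪x, v ((n : ℤ) - k)⟫_𝕜‖₊ : ℝ≥0∞) ^ 2) /
        ((box1 R 0).encard : ℝ≥0∞) = ⊤ := by
    intro R k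
    -- the box around `k` always contains `n = k`, which contributes `‖⟪x, v 0⟫‖ ^ 2`
    have hlocal : ∑' n : box1 R k, (‖⟪x, v ((n : ℤ) - k)⟫_𝕜‖₊ : ℝ≥0∞) ^ 2 ≠ 0 := by
      rw [Ne, ENNReal.tsum_eq_zero, not_forall]
      exact ⟨⟨k, by simp [box1]⟩, by simpa using hx⟩
    have hweight : (∑' n : ℤ, (‖⟪x, v n⟫_𝕜‖₊ : ℝ≥0∞) ^ 2)⁻¹ ≠ 0 :=
      ENNReal.inv_ne_zero.mpr (hv.tsum_nnnorm_inner_sq_ne_top x)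
    rw [ENNReal.tsum_const_eq_top_of_ne_zero (mul_ne_zero hweight hlocal)]
    exact ENNReal.top_div_of_ne_top (by simpa using encard_box1_ne_top R 0)
  simp only [hterm, iInf_const, liminf_const]

end InnerProductSpace

theorem constant_family_density_example_general
    {E : Type*} [NormedAddCommGroup E] [InnerProductSpace ℂ E]
    (e : HilbertBasis ℤ ℂ E) (f : E)
    (hf : HasSum (fun m : ℤ => ((2 : ℂ) ^ (-|m|)) • (e m : E)) f) :
    (∃ r : ℤ → ℝ≥0, (∑' k, (r k : ℝ≥0∞)) < ⊤ ∧
      ∀ n : ℤ, ‖(inner ℂ f (e n : E) : ℂ)‖₊ ≤ r ((0 : ℤ) - n)) ∧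
    lowerDensity1 (fun _ : ℤ => (0 : ℤ)) Set.univ = 0 ∧
    Filter.liminf (fun R : ℕ =>
      (⨅ k : ℤ,
        (∑' _i : ℤ, (∑' n : ℤ, (‖(inner ℂ f (e n : E) : ℂ)‖₊ : ℝ≥0∞) ^ 2)⁻¹ *
          ∑' n : box1 R k, (‖(inner ℂ f (e ((n : ℤ) - k) : E) : ℂ)‖₊ : ℝ≥0∞) ^ 2) /
          ((box1 R 0).encard : ℝ≥0∞))) atTop = ⊤ := by
  have hcoef : ∀ n : ℤ, ‖⟪f, e n⟫_ℂ‖₊ = (2 : ℝ≥0) ^ (-|n|) := by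
    intro n
    rw [← NNReal.coe_inj, coe_nnnorm, norm_inner_symm,
      e.orthonormal.inner_left_eq_of_hasSum hf n]
    simp
  refine ⟨⟨fun k => 2 ^ (-|k|), ?_, fun n => ?_⟩, lowerDensity1_const_eq_zero 0 univ,
    liminf_iInf_constFamily_density_eq_top e.orthonormal ?_⟩
  · exact (ENNReal.tsum_coe_ne_top_iff_summable.mpr summable_two_zpow_neg_abs).lt_top
  · simp only [hcoef, zero_sub, abs_neg, le_refl]
  · simp [← nnnorm_ne_zero_iff, hcoef]

/-- With `𝒢 = {e_k}_{k∈ℤ}` an orthonormal basis, the constant family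
`f_i = f = ∑_m 2^{−|m|} e_m` (`i ∈ ℤ`) with localization map `a ≡ 0` is `ℓ¹`-localized and
`D⁻(a;ℤ) = 0`, yet the index-free lower density `D⁻(𝓕;𝒢)` is infinite. -/
theorem constant_family_density_example
    {E : Type*} [NormedAddCommGroup E] [InnerProductSpace ℂ E] [CompleteSpace E]
    (e : HilbertBasis ℤ ℂ E) (f : E)
    (hf : HasSum (fun m : ℤ => ((2 : ℂ) ^ (-|m|)) • (e m : E)) f) :
    (∃ r : ℤ → ℝ≥0, (∑' k, (r k : ℝ≥0∞)) < ⊤ ∧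
      ∀ n : ℤ, ‖(inner ℂ f (e n : E) : ℂ)‖₊ ≤ r ((0 : ℤ) - n)) ∧
    lowerDensity1 (fun _ : ℤ => (0 : ℤ)) Set.univ = 0 ∧
    Filter.liminf (fun R : ℕ =>
      (⨅ k : ℤ,
        (∑' _i : ℤ, (∑' n : ℤ, (‖(inner ℂ f (e n : E) : ℂ)‖₊ : ℝ≥0∞) ^ 2)⁻¹ *
          ∑' n : box1 R k, (‖(inner ℂ f (e ((n : ℤ) - k) : E) : ℂ)‖₊ : ℝ≥0∞) ^ 2) /
          ((box1 R 0).encard : ℝ≥0∞))) atTop = ⊤ :=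
  constant_family_density_example_general e f hf
end
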